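/- arXiv:2408.06912 — 13 statements merged into one kernel-verified Lean document; each statement's English description precedes it below -/
import Mathlib

section
/- For all n ≥ 0, the Motzkin number satisfies M_{n} = \sum_{k=0}^{\lfloor n/2 \rfloor} binom(n, 2k) * C_k, where C_k is the k-th Catalan number. -/
/-!
Both sides satisfy the Motzkin recurrence `M (m + 2) = M (m + 1) + ∑_{a + b = m} M a * M b`.
For `T n = ∑ₖ C(n, 2k) Cₖ`, Pascal's rule splits `T (m + 2)` into `T (m + 1)` and
`∑ₖ C(m + 1, 2k + 1) C_{k+1}`. Expanding `C_{k+1} = ∑_{i + j = k} Cᵢ Cⱼ` and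
`C(m + 1, 2i + 2j + 1) = ∑_{a + b = m} C(a, 2i) C(b, 2j)` (upper Vandermonde) turns the latter
into `∑_{a + b = m} T a * T b`.
-/

open Finset

theorem Finset.sum_range_sum_antidiagonal_eq_sum_range_sum_range {M : Type*} [AddCommMonoid M]
    {N : ℕ} {F : ℕ × ℕ → M} (hF : ∀ p : ℕ × ℕ, N ≤ p.1 + p.2 → F p = 0) :
    ∑ k ∈ range N, ∑ p ∈ antidiagonal k, F p = ∑ i ∈ range N, ∑ j ∈ range N, F (i, j) :=
  calc ∑ k ∈ range N, ∑ p ∈ antidiagonal k, F p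
      = ∑ k ∈ range N, ∑ p ∈ range N ×ˢ range N with p.1 + p.2 = k, F p := by
        refine sum_congr rfl fun k hk => sum_congr ?_ fun _ _ => rfl
        ext ⟨i, j⟩
        simp only [mem_range, HasAntidiagonal.mem_antidiagonal, mem_filter, mem_product] at hk ⊢
        omega
    _ = ∑ p ∈ range N ×ˢ range N with p.1 + p.2 ∈ range N, F p :=
        sum_fiberwise_eq_sum_filter _ _ _ _
    _ = ∑ i ∈ range N, ∑ j ∈ range N, F (i, j) := by
        rw [sum_filter_of_ne fun p _ hp => mem_range.2 ?_, sum_product]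
        by_contra! h
        exact hp (hF p h)

theorem Nat.sum_antidiagonal_choose_mul_choose (p q m : ℕ) :
    ∑ ab ∈ antidiagonal m, ab.1.choose p * ab.2.choose q = (m + 1).choose (p + q + 1) := by
  induction m generalizing p with
  | zero => cases p <;> cases q <;> simp [Nat.choose_eq_zero_of_lt]
  | succ m ih =>
    rw [Nat.sum_antidiagonal_succ]
    cases p with
    | zero =>
      have h := ih 0
      simp only [Nat.choose_zero_right, one_mul, zero_add] at h ⊢
      rw [h, ← Nat.choose_succ_succ']
    | succ p =>
      simp only [Nat.choose_zero_succ, zero_mul, zero_add, Nat.choose_succ_succ' _ p, add_mul,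
        sum_add_distrib, ih]
      rw [show p + 1 + q + 1 = p + q + 1 + 1 by ring, Nat.choose_succ_succ' (m + 1)]

theorem Nat.sum_range_succ_choose_two_mul_mul (f : ℕ → ℕ) (n N : ℕ) :
    ∑ k ∈ range (N + 1), (n + 1).choose (2 * k) * f k =
      ∑ k ∈ range (N + 1), n.choose (2 * k) * f k +
        ∑ k ∈ range N, n.choose (2 * k + 1) * f (k + 1) := by
  simp only [sum_range_succ' _ N, mul_add, Nat.choose_zero_right, mul_zero, Nat.choose_succ_succ',
    add_mul, sum_add_distrib]
  ring

theorem Nat.sum_range_choose_two_mul_mul_of_lt (f : ℕ → ℕ) {n N : ℕ} (hN : n / 2 < N) :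
    ∑ k ∈ range N, n.choose (2 * k) * f k = ∑ k ∈ range (n / 2 + 1), n.choose (2 * k) * f k :=
  eventually_constant_sum (fun k hk => by rw [Nat.choose_eq_zero_of_lt (by omega), zero_mul]) hN

theorem Nat.sum_antidiagonal_mul_sum_range_choose_two_mul (f g : ℕ → ℕ) (m N : ℕ) :
    ∑ ab ∈ antidiagonal m, (∑ i ∈ range N, ab.1.choose (2 * i) * f i) *
        (∑ j ∈ range N, ab.2.choose (2 * j) * g j) =
      ∑ i ∈ range N, ∑ j ∈ range N, f i * g j * (m + 1).choose (2 * i + 2 * j + 1) := by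
  simp_rw [sum_mul_sum, ← Nat.sum_antidiagonal_choose_mul_choose, mul_sum]
  rw [sum_comm]
  refine sum_congr rfl fun i _ => ?_
  rw [sum_comm]
  refine sum_congr rfl fun j _ => sum_congr rfl fun ab _ => by ring

def chooseCatalanSum (n : ℕ) : ℕ :=
  ∑ k ∈ range (n / 2 + 1), n.choose (2 * k) * catalan k

theorem chooseCatalanSum_add_two (m : ℕ) :
    chooseCatalanSum (m + 2) = chooseCatalanSum (m + 1) +
      ∑ p ∈ antidiagonal m, chooseCatalanSum p.1 * chooseCatalanSum p.2 := by
  set N := m / 2 + 1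
  have hodd : ∑ k ∈ range N, (m + 1).choose (2 * k + 1) * catalan (k + 1) =
      ∑ i ∈ range N, ∑ j ∈ range N, catalan i * catalan j * (m + 1).choose (2 * i + 2 * j + 1) :=
    calc _ = ∑ k ∈ range N, ∑ p ∈ antidiagonal k,
            catalan p.1 * catalan p.2 * (m + 1).choose (2 * p.1 + 2 * p.2 + 1) := by
          refine sum_congr rfl fun k _ => ?_
          rw [catalan_succ', mul_comm, sum_mul]
          refine sum_congr rfl fun p hp => ?_
          rw [← HasAntidiagonal.mem_antidiagonal.1 hp, mul_add]
      _ = _ := sum_range_sum_antidiagonal_eq_sum_range_sum_range fun p hp => by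
          rw [Nat.choose_eq_zero_of_lt (by omega), mul_zero]
  calc chooseCatalanSum (m + 2)
      = ∑ k ∈ range (N + 1), (m + 1).choose (2 * k) * catalan k +
          ∑ k ∈ range N, (m + 1).choose (2 * k + 1) * catalan (k + 1) := by
        rw [chooseCatalanSum, show (m + 2) / 2 + 1 = N + 1 by omega,
          Nat.sum_range_succ_choose_two_mul_mul]
    _ = chooseCatalanSum (m + 1) + ∑ p ∈ antidiagonal m,
          (∑ i ∈ range N, p.1.choose (2 * i) * catalan i) *
            ∑ j ∈ range N, p.2.choose (2 * j) * catalan j := by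
        rw [Nat.sum_range_choose_two_mul_mul_of_lt _ (show (m + 1) / 2 < N + 1 by omega), hodd,
          Nat.sum_antidiagonal_mul_sum_range_choose_two_mul]
        rfl
    _ = _ := by
        refine congrArg _ (sum_congr rfl fun p hp => ?_)
        have hp := HasAntidiagonal.mem_antidiagonal.1 hp
        rw [Nat.sum_range_choose_two_mul_mul_of_lt _ (show p.1 / 2 < N by omega),
          Nat.sum_range_choose_two_mul_mul_of_lt _ (show p.2 / 2 < N by omega)]
        rfl

theorem eq_of_motzkin_recurrence {M M' : ℕ → ℕ} (h0 : M 0 = M' 0) (h1 : M 1 = M' 1)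
    (hM : ∀ m, M (m + 2) = M (m + 1) + ∑ p ∈ antidiagonal m, M p.1 * M p.2)
    (hM' : ∀ m, M' (m + 2) = M' (m + 1) + ∑ p ∈ antidiagonal m, M' p.1 * M' p.2) :
    M = M' := by
  funext n
  induction n using Nat.strong_induction_on with
  | _ n ih =>
    match n, ih with
    | 0, _ => exact h0
    | 1, _ => exact h1
    | m + 2, ih =>
      rw [hM, hM', ih (m + 1) (by omega)]
      congr 1
      refine sum_congr rfl fun p hp => ?_
      have hp := HasAntidiagonal.mem_antidiagonal.1 hp
      rw [ih p.1 (by omega), ih p.2 (by omega)]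

/-- If M satisfies the Motzkin recurrence M 0 = 1, M (n+1) = M n + ∑_{k=0}^{n-1} M k M (n-1-k),
then M n = ∑_{k=0}^{⌊n/2⌋} C(n,2k) * catalan k. -/
theorem motzkin_eq_sum_choose_catalan (M : ℕ → ℕ) (h0 : M 0 = 1)
    (hrec : ∀ n, M (n + 1) = M n + ∑ k ∈ Finset.range n, M k * M (n - 1 - k)) :
    ∀ n, M n = ∑ k ∈ Finset.range (n / 2 + 1), n.choose (2 * k) * catalan k := by
  have hrec' : ∀ m, M (m + 2) = M (m + 1) + ∑ p ∈ antidiagonal m, M p.1 * M p.2 := fun m => by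
    rw [hrec, Nat.sum_antidiagonal_eq_sum_range_succ (fun a b => M a * M b)]
    rfl
  have h1 : M 1 = 1 := by simp [hrec 0, h0]
  have hM : M = chooseCatalanSum :=
    eq_of_motzkin_recurrence (by simp [h0, chooseCatalanSum]) (by simp [h1, chooseCatalanSum])
      hrec' chooseCatalanSum_add_two
  exact congrFun hM
end

section
/- For all n ≥ 0, the Catalan number satisfies C_{n+1} = \sum_{k=0}^{n} binom(n, k) * M_k, where M_k is the k-th Motzkin number. -/
/-!
Both `n ↦ catalan (n + 1)` and the binomial transform `B` of `M` solve
`u (n + 1) = 2 u n + ∑_{k < n} u k u (n - 1 - k)` with `u 0 = 1`, and this recurrence determines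
`u`. For Catalan numbers it is the defining recurrence with its two boundary terms split off.
For `B`, Pascal's rule turns the recurrence of `M` (coefficient 1) into the same recurrence with
coefficient 2; the quadratic term is carried over by the identity
`∑_{i + j = n} B f i * B g j = ∑_k C(n + 1, k + 1) (f * g)_k`, proved by induction on `n`
after peeling the first term off both the antidiagonal and the Cauchy product.
-/

open Finset

section BinomialTransform

variable {R : Type*} [Semiring R]

def binomialTransform (f : ℕ → R) (n : ℕ) : R :=
  ∑ k ∈ range (n + 1), (n.choose k : R) * f k

def cauchyProduct (f g : ℕ → R) (n : ℕ) : R :=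
  ∑ ij ∈ antidiagonal n, f ij.1 * g ij.2

theorem binomialTransform_zero (f : ℕ → R) : binomialTransform f 0 = f 0 := by
  simp [binomialTransform]

theorem binomialTransform_succ (f : ℕ → R) (n : ℕ) :
    binomialTransform f (n + 1) =
      binomialTransform f n + binomialTransform (fun k ↦ f (k + 1)) n :=
  sum_choose_succ_mul (fun i _ ↦ f i) n

theorem binomialTransform_succ_eq_add_sum (f : ℕ → R) (n : ℕ) :
    binomialTransform f (n + 1) =
      f 0 + ∑ k ∈ range (n + 1), ((n + 1).choose (k + 1) : R) * f (k + 1) := by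
  rw [binomialTransform, sum_range_succ', add_comm]
  simp

theorem cauchyProduct_succ (f g : ℕ → R) (n : ℕ) :
    cauchyProduct f g (n + 1) = f 0 * g (n + 1) + cauchyProduct (fun k ↦ f (k + 1)) g n :=
  Nat.sum_antidiagonal_succ

theorem sum_range_choose_succ_mul_succ (c : ℕ → R) (n : ℕ) :
    ∑ k ∈ range (n + 2), ((n + 2).choose (k + 1) : R) * c k =
      binomialTransform c (n + 1) + ∑ k ∈ range (n + 1), ((n + 1).choose (k + 1) : R) * c k := by
  simp_rw [Nat.choose_succ_succ' (n + 1), Nat.cast_add, add_mul, sum_add_distrib]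
  rw [sum_range_succ (fun k ↦ ((n + 1).choose (k + 1) : R) * c k), Nat.choose_succ_self]
  simp [binomialTransform]

theorem sum_antidiagonal_binomialTransform_mul (f g : ℕ → R) (n : ℕ) :
    ∑ ij ∈ antidiagonal n, binomialTransform f ij.1 * binomialTransform g ij.2 =
      ∑ k ∈ range (n + 1), ((n + 1).choose (k + 1) : R) * cauchyProduct f g k := by
  induction n generalizing f with
  | zero => simp [binomialTransform, cauchyProduct]
  | succ n ih =>
    have hfirst : binomialTransform (cauchyProduct f g) (n + 1) =
        f 0 * binomialTransform g (n + 1) + ∑ k ∈ range (n + 1),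
          ((n + 1).choose (k + 1) : R) * cauchyProduct (fun k ↦ f (k + 1)) g k := by
      simp only [binomialTransform_succ_eq_add_sum, cauchyProduct_succ, mul_add, sum_add_distrib]
      rw [Finset.mul_sum, ← add_assoc]
      congr 2
      · simp [cauchyProduct]
      · refine sum_congr rfl fun k _ ↦ ?_
        rw [← mul_assoc, ← mul_assoc, Nat.cast_comm]
    rw [Nat.sum_antidiagonal_succ, sum_range_choose_succ_mul_succ, hfirst, ← ih, ← ih]
    simp only [binomialTransform_zero, binomialTransform_succ, add_mul, sum_add_distrib]
    abel

def SatisfiesQuadraticRecurrence (a : R) (u : ℕ → R) : Prop :=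
  ∀ n, u (n + 1) = a * u n + ∑ k ∈ range n, u k * u (n - 1 - k)

theorem satisfiesQuadraticRecurrence_binomialTransform {a : R} {f : ℕ → R}
    (hf : SatisfiesQuadraticRecurrence a f) :
    SatisfiesQuadraticRecurrence (a + 1) (binomialTransform f) := by
  intro n
  have hshift : binomialTransform (fun k ↦ f (k + 1)) n = a * binomialTransform f n +
      ∑ k ∈ range (n + 1), (n.choose k : R) * ∑ i ∈ range k, f i * f (k - 1 - i) := by
    have hf' : ∀ k, f (k + 1) = a * f k + ∑ i ∈ range k, f i * f (k - 1 - i) := hf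
    simp only [binomialTransform, hf', mul_add, sum_add_distrib, Finset.mul_sum]
    congr 1
    refine sum_congr rfl fun k _ ↦ ?_
    rw [← mul_assoc, ← mul_assoc, Nat.cast_comm]
  have hconv : ∑ k ∈ range (n + 1), (n.choose k : R) * ∑ i ∈ range k, f i * f (k - 1 - i) =
      ∑ k ∈ range n, binomialTransform f k * binomialTransform f (n - 1 - k) := by
    cases n with
    | zero => simp
    | succ m =>
      rw [sum_range_succ', range_zero, sum_empty, mul_zero, add_zero, Nat.add_sub_cancel,
        ← Nat.sum_antidiagonal_eq_sum_range_succ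
          (fun i j ↦ binomialTransform f i * binomialTransform f j),
        sum_antidiagonal_binomialTransform_mul]
      refine sum_congr rfl fun k _ ↦ ?_
      rw [cauchyProduct, Nat.sum_antidiagonal_eq_sum_range_succ (fun i j ↦ f i * f j)]
      simp
  rw [binomialTransform_succ, hshift, hconv, add_mul, one_mul]
  abel

theorem SatisfiesQuadraticRecurrence.eq {a : R} {u v : ℕ → R}
    (hu : SatisfiesQuadraticRecurrence a u) (hv : SatisfiesQuadraticRecurrence a v)
    (h0 : u 0 = v 0) : u = v := by
  funext n
  induction n using Nat.strong_induction_on with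
  | _ n ih =>
    cases n with
    | zero => exact h0
    | succ n =>
      rw [hu, hv, ih n n.lt_succ_self]
      congr 1
      refine sum_congr rfl fun k hk ↦ ?_
      rw [mem_range] at hk
      rw [ih k (by omega), ih (n - 1 - k) (by omega)]

end BinomialTransform

theorem satisfiesQuadraticRecurrence_catalan_succ :
    SatisfiesQuadraticRecurrence 2 (fun n ↦ catalan (n + 1)) := by
  intro n
  dsimp only
  rw [catalan_succ', Nat.sum_antidiagonal_eq_sum_range_succ (fun i j ↦ catalan i * catalan j),
    sum_range_succ', sum_range_succ]
  simp only [catalan_zero, Nat.sub_self, Nat.sub_zero, Nat.add_sub_add_right, one_mul, mul_one]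
  rw [two_mul, add_assoc, add_comm]
  congr 1
  exact sum_congr rfl fun k hk ↦ by rw [mem_range] at hk; rw [show n - 1 - k + 1 = n - k by omega]

/-- If M satisfies the Motzkin recurrence, then C_{n+1} = ∑_{k=0}^{n} C(n,k) * M k. -/
theorem catalan_succ_eq_sum_choose_motzkin (M : ℕ → ℕ) (h0 : M 0 = 1)
    (hrec : ∀ n, M (n + 1) = M n + ∑ k ∈ Finset.range n, M k * M (n - 1 - k)) :
    ∀ n, catalan (n + 1) = ∑ k ∈ Finset.range (n + 1), n.choose k * M k := by
  have hM : SatisfiesQuadraticRecurrence 1 M := fun n ↦ by rw [one_mul, hrec]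
  have hcat := satisfiesQuadraticRecurrence_catalan_succ.eq
    (satisfiesQuadraticRecurrence_binomialTransform hM)
    (by rw [binomialTransform_zero, h0, catalan_one])
  intro n
  simpa [binomialTransform] using congrFun hcat n
end

section
/- For n ≥ 1, evaluating the Narayana polynomial at x = -1 gives: N_{2n}(-1) = 0 and N_{2n+1}(-1) = (-1)^{n+1} C_n, where C_n is the n-th Catalan number. -/
/-!
Since `C(m, k-1) = C(m, m+1-k)`, the alternating sum `∑ (-1)^k C(m,k) C(m,k-1)` is the coefficient
of `x^(m+1)` in `(1 - x)^m (1 + x)^m = (1 - x²)^m`. It vanishes for `m` even and equals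
`(-1)^((m+1)/2) C(m, (m+1)/2)` for `m` odd; for `m = 2n+1` that binomial is `(2n+1) C_n`.
-/

open Polynomial Finset

section
variable {R : Type*} [CommRing R]

theorem coeff_one_sub_X_pow (m k : ℕ) :
    ((1 - X : R[X]) ^ m).coeff k = (-1) ^ k * m.choose k := by
  have : (1 - X : R[X]) ^ m = ((1 + X) ^ m).comp (C (-1) * X) := by simp [sub_eq_add_neg]
  rw [this, comp_C_mul_X_coeff, coeff_one_add_X_pow, mul_comm]

theorem coeff_one_sub_X_sq_pow (m N : ℕ) :
    ((1 - X ^ 2 : R[X]) ^ m).coeff N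
      = if 2 ∣ N then (-1 : R) ^ (N / 2) * m.choose (N / 2) else 0 := by
  have : (1 - X ^ 2 : R[X]) ^ m = expand R 2 ((1 - X) ^ m) := by simp
  rw [this, coeff_expand two_pos, coeff_one_sub_X_pow]

theorem sum_antidiagonal_neg_one_pow_mul_choose_mul_choose (m N : ℕ) :
    ∑ p ∈ antidiagonal N, (-1 : R) ^ p.1 * m.choose p.1 * m.choose p.2
      = if 2 ∣ N then (-1 : R) ^ (N / 2) * m.choose (N / 2) else 0 := by
  have : (1 - X ^ 2 : R[X]) ^ m = (1 - X) ^ m * (1 + X) ^ m := by rw [← mul_pow]; ring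
  rw [← coeff_one_sub_X_sq_pow, this, coeff_mul]
  simp only [coeff_one_sub_X_pow, coeff_one_add_X_pow]

theorem sum_Icc_neg_one_pow_mul_choose_mul_choose_sub_one (m : ℕ) :
    ∑ k ∈ Icc 1 m, (-1 : R) ^ k * m.choose k * m.choose (k - 1)
      = if 2 ∣ m + 1 then (-1 : R) ^ ((m + 1) / 2) * m.choose ((m + 1) / 2) else 0 := by
  rw [← sum_antidiagonal_neg_one_pow_mul_choose_mul_choose,
    Nat.sum_antidiagonal_eq_sum_range_succ_mk]
  refine sum_subset_zero_on_sdiff ?_ ?_ ?_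
  · intro k hk
    simp only [mem_Icc, mem_range] at hk ⊢
    omega
  · intro k hk
    obtain rfl | rfl : k = 0 ∨ k = m + 1 := by
      simp only [mem_sdiff, mem_Icc, mem_range] at hk
      omega
    all_goals simp
  · intro k hk
    simp only [mem_Icc] at hk
    rw [show m + 1 - k = m - (k - 1) by omega, Nat.choose_symm (by omega)]
end

theorem choose_two_mul_add_one_eq_mul_catalan (n : ℕ) :
    (2 * n + 1).choose (n + 1) = (2 * n + 1) * catalan n := by
  refine Nat.eq_of_mul_eq_mul_right n.succ_pos ?_
  rw [← Nat.add_one_mul_choose_eq, Nat.mul_assoc, Nat.mul_comm _ (n + 1),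
    succ_mul_catalan_eq_centralBinom, Nat.centralBinom_eq_two_mul_choose]

theorem sum_narayana_mul_neg_one_pow {K : Type*} [Field K] (m : ℕ) :
    ∑ k ∈ Icc 1 m, (m.choose k * m.choose (k - 1) : K) / m * (-1) ^ k
      = (if 2 ∣ m + 1 then (-1 : K) ^ ((m + 1) / 2) * m.choose ((m + 1) / 2) else 0) / m := by
  rw [← sum_Icc_neg_one_pow_mul_choose_mul_choose_sub_one, sum_div]
  exact sum_congr rfl fun k _ => by ring

theorem narayana_poly_at_neg_one_general (n : ℕ) :
    (∑ k ∈ Finset.Icc 1 (2 * n),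
        (((2 * n).choose k * (2 * n).choose (k - 1) : ℚ) / (2 * n)) * (-1 : ℚ) ^ k = 0)
    ∧ (∑ k ∈ Finset.Icc 1 (2 * n + 1),
        (((2 * n + 1).choose k * (2 * n + 1).choose (k - 1) : ℚ) / (2 * n + 1)) * (-1 : ℚ) ^ k
          = (-1 : ℚ) ^ (n + 1) * catalan n) := by
  constructor
  · have h := sum_narayana_mul_neg_one_pow (K := ℚ) (2 * n)
    rw [if_neg (by omega), zero_div] at h
    exact_mod_cast h
  · have h := sum_narayana_mul_neg_one_pow (K := ℚ) (2 * n + 1)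
    rw [if_pos ⟨n + 1, by ring⟩, show (2 * n + 1 + 1) / 2 = n + 1 by omega,
      choose_two_mul_add_one_eq_mul_catalan] at h
    push_cast at h
    rw [h]
    field_simp

/-- For n ≥ 1, N_{2n}(-1) = 0 and N_{2n+1}(-1) = (-1)^{n+1} * C_n. -/
theorem narayana_poly_at_neg_one (n : ℕ) (hn : 1 ≤ n) :
    (∑ k ∈ Finset.Icc 1 (2 * n),
        (((2 * n).choose k * (2 * n).choose (k - 1) : ℚ) / (2 * n)) * (-1 : ℚ) ^ k = 0)
    ∧ (∑ k ∈ Finset.Icc 1 (2 * n + 1),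
        (((2 * n + 1).choose k * (2 * n + 1).choose (k - 1) : ℚ) / (2 * n + 1)) * (-1 : ℚ) ^ k
          = (-1 : ℚ) ^ (n + 1) * catalan n) :=
  narayana_poly_at_neg_one_general n
end

section
/- For n ≥ 1, the number of plane trees with 2n edges and an even number of leaves equals the number of plane trees with 2n edges and an odd number of leaves. -/
/-! The Narayana numbers are symmetric, `N(m, k) = N(m, m + 1 - k)`, and when `m` is even the
reflection `k ↦ m + 1 - k` of `[1, m]` exchanges even and odd `k`. -/

theorem Nat.choose_mul_choose_pred_reflect {m k : ℕ} (hk1 : 1 ≤ k) (hkm : k ≤ m) :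
    m.choose (m + 1 - k) * m.choose (m + 1 - k - 1) = m.choose k * m.choose (k - 1) := by
  have hfirst : m + 1 - k = m - (k - 1) := by omega
  have hsecond : m + 1 - k - 1 = m - k := by omega
  rw [hsecond, hfirst, Nat.choose_symm (by omega), Nat.choose_symm hkm, mul_comm]

theorem Finset.sum_filter_even_Icc_eq_sum_filter_odd_reflect {M : Type*} [AddCommMonoid M]
    {m : ℕ} (hm : Even m) (f : ℕ → M) :
    ∑ k ∈ (Icc 1 m).filter Even, f k = ∑ k ∈ (Icc 1 m).filter Odd, f (m + 1 - k) := by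
  obtain ⟨r, rfl⟩ := hm
  refine sum_nbij' (fun k => r + r + 1 - k) (fun k => r + r + 1 - k) ?_ ?_ ?_ ?_ ?_ <;>
    intro k hk <;>
    simp only [mem_filter, mem_Icc, Nat.even_iff, Nat.odd_iff] at hk ⊢
  · omega
  · omega
  · omega
  · omega
  · congr 1
    omega

theorem even_leaves_eq_odd_leaves_general (n : ℕ) :
    ∑ k ∈ (Finset.Icc 1 (2 * n)).filter (fun k => Even k),
        (((2 * n).choose k * (2 * n).choose (k - 1) : ℚ) / (2 * n))
      = ∑ k ∈ (Finset.Icc 1 (2 * n)).filter (fun k => Odd k),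
        (((2 * n).choose k * (2 * n).choose (k - 1) : ℚ) / (2 * n)) := by
  rw [Finset.sum_filter_even_Icc_eq_sum_filter_odd_reflect (even_two_mul n)]
  refine Finset.sum_congr rfl fun k hk => ?_
  obtain ⟨hk1, hkm⟩ := Finset.mem_Icc.mp (Finset.mem_filter.mp hk).1
  exact_mod_cast congrArg (fun x : ℕ => (x : ℚ) / (2 * n))
    (Nat.choose_mul_choose_pred_reflect hk1 hkm)

/-- For n ≥ 1, the number of plane trees with 2n edges and an even number of leaves equals
the number with an odd number of leaves.  The number of plane trees with m edges and k leaves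
is the Narayana number N(m,k) = (1/m) C(m,k) C(m,k-1). -/
theorem even_leaves_eq_odd_leaves (n : ℕ) (hn : 1 ≤ n) :
    ∑ k ∈ (Finset.Icc 1 (2 * n)).filter (fun k => Even k),
        (((2 * n).choose k * (2 * n).choose (k - 1) : ℚ) / (2 * n))
      = ∑ k ∈ (Finset.Icc 1 (2 * n)).filter (fun k => Odd k),
        (((2 * n).choose k * (2 * n).choose (k - 1) : ℚ) / (2 * n)) :=
  even_leaves_eq_odd_leaves_general n
end

section
/- The formal power series F(q) = \sum_{n≥0} M_n(u;v) q^n with coefficients in ℚ[u,v], where M_n(u;v) = \sum_{k=0}^{\lfloor n/2 \rfloor} binom(n,2k) C_k u^{k+1} v^{n-2k}, satisfies the algebraic equation q^2 F(q)^2 + (vq - 1) F(q) + u = 0. -/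
/-- The generating function F(q) = ∑ M_n(u;v) q^n of the two-variable Motzkin polynomials,
with coefficients in ℚ[u,v] (u = X 0, v = X 1). -/
noncomputable def motzkinGF : PowerSeries (MvPolynomial (Fin 2) ℚ) :=
  PowerSeries.mk fun n =>
    ∑ k ∈ Finset.range (n / 2 + 1),
      ((n.choose (2 * k) * catalan k : ℕ) : MvPolynomial (Fin 2) ℚ)
        * (MvPolynomial.X 0) ^ (k + 1) * (MvPolynomial.X 1) ^ (n - 2 * k)


open Finset

lemma hockey (n r : ℕ) : ∑ i ∈ range (n + 1), i.choose r = (n + 1).choose (r + 1) := by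
  induction n with
  | zero =>
    cases r with
    | zero => simp
    | succ r => simp [Nat.choose_eq_zero_of_lt (by omega : (1:ℕ) < r + 1 + 1)]
  | succ n ih =>
    rw [Finset.sum_range_succ, ih, Nat.choose_succ_succ (n + 1) r, Nat.succ_eq_add_one]
    omega

lemma vandU (r s : ℕ) : ∀ n, ∑ i ∈ range (n + 1), i.choose r * (n - i).choose s
    = (n + 1).choose (r + s + 1) := by
  induction s with
  | zero => intro n; simpa using hockey n r
  | succ s ih =>
    intro n
    induction n with
    | zero =>
      simp only [Finset.range_one, Finset.sum_singleton, Nat.zero_sub, Nat.choose]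
      cases r <;> simp [Nat.choose_succ_succ]
    | succ n ihn =>
      rw [Finset.sum_range_succ]
      have h1 : ∀ i ∈ range (n + 1), i.choose r * (n + 1 - i).choose (s + 1)
          = i.choose r * (n - i).choose s + i.choose r * (n - i).choose (s + 1) := by
        intro i hi
        rw [mem_range] at hi
        have : n + 1 - i = (n - i) + 1 := by omega
        rw [this, Nat.choose_succ_succ, Nat.mul_add]
      rw [Finset.sum_congr rfl h1, Finset.sum_add_distrib, ih n, ihn]
      have e1 : (n + 1 + 1).choose (r + (s + 1) + 1)
          = (n + 1).choose (r + s + 1) + (n + 1).choose (r + (s + 1) + 1) := by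
        have := Nat.choose_succ_succ (n + 1) (r + s + 1)
        simpa [Nat.add_assoc, Nat.add_comm, Nat.add_left_comm] using this
      simp [e1]

lemma tri {M : Type*} [AddCommMonoid M] (N : ℕ) (F : ℕ → ℕ → M)
    (hF : ∀ a b, N ≤ a + b → F a b = 0) :
    ∑ a ∈ range N, ∑ b ∈ range N, F a b = ∑ c ∈ range N, ∑ a ∈ range (c + 1), F a (c - a) := by
  have h1 : ∀ c ∈ range N, ∑ a ∈ range (c + 1), F a (c - a)
      = ∑ p ∈ Finset.HasAntidiagonal.antidiagonal c, F p.1 p.2 := by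
    intro c _
    rw [Finset.Nat.sum_antidiagonal_eq_sum_range_succ_mk]
  rw [Finset.sum_congr rfl h1, ← Finset.sum_biUnion]
  · rw [← Finset.sum_product']
    refine (Finset.sum_subset ?_ ?_).symm
    · intro p hp
      simp only [Finset.mem_biUnion, Finset.mem_range, Finset.HasAntidiagonal.mem_antidiagonal] at hp
      obtain ⟨c, hc, hpc⟩ := hp
      simp only [Finset.mem_product, Finset.mem_range]
      omega
    · intro p hp hnp
      apply hF
      by_contra h
      push_neg at h
      exact hnp (Finset.mem_biUnion.mpr ⟨p.1 + p.2, Finset.mem_range.mpr (by omega), by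
        simp [Finset.HasAntidiagonal.mem_antidiagonal]⟩)
  · intro x hx y hy hxy
    simp only [Function.onFun, Finset.disjoint_left, Finset.HasAntidiagonal.mem_antidiagonal]
    intro a ha hb
    exact hxy (by omega)


noncomputable def PP (n : ℕ) : MvPolynomial (Fin 2) ℚ :=
  ∑ k ∈ Finset.range (n / 2 + 1),
    ((n.choose (2 * k) * catalan k : ℕ) : MvPolynomial (Fin 2) ℚ)
      * (MvPolynomial.X 0) ^ (k + 1) * (MvPolynomial.X 1) ^ (n - 2 * k)

lemma PP_eq (n N : ℕ) (h : n / 2 + 1 ≤ N) : PP n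
    = ∑ k ∈ Finset.range N,
      ((n.choose (2 * k) * catalan k : ℕ) : MvPolynomial (Fin 2) ℚ)
        * (MvPolynomial.X 0) ^ (k + 1) * (MvPolynomial.X 1) ^ (n - 2 * k) := by
  refine Finset.sum_subset (Finset.range_subset_range.mpr h) fun k _ hk => ?_
  rw [Finset.mem_range, not_lt] at hk
  rw [Nat.choose_eq_zero_of_lt (by omega : n < 2 * k)]
  simp

lemma catalan_succ_range (n : ℕ) :
    catalan (n + 1) = ∑ i ∈ range (n + 1), catalan i * catalan (n - i) := by
  rw [catalan_succ', Finset.Nat.sum_antidiagonal_eq_sum_range_succ_mk]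

lemma conv (m : ℕ) : ∑ i ∈ range (m + 1), PP i * PP (m - i)
    = ∑ c ∈ range (m + 1),
      (((m + 1).choose (2 * c + 1) * catalan (c + 1) : ℕ) : MvPolynomial (Fin 2) ℚ)
        * (MvPolynomial.X 0) ^ (c + 2) * (MvPolynomial.X 1) ^ (m - 2 * c) := by
  set u : MvPolynomial (Fin 2) ℚ := MvPolynomial.X 0
  set v : MvPolynomial (Fin 2) ℚ := MvPolynomial.X 1
  have key : ∀ a b : ℕ, ∑ i ∈ range (m + 1), i.choose (2 * a) * (m - i).choose (2 * b)
      = (m + 1).choose (2 * (a + b) + 1) := by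
    intro a b
    rw [vandU]
    congr 1
    ring
  calc ∑ i ∈ range (m + 1), PP i * PP (m - i)
      = ∑ i ∈ range (m + 1), ∑ a ∈ range (m + 1), ∑ b ∈ range (m + 1),
          (((i.choose (2 * a) * catalan a : ℕ) : MvPolynomial (Fin 2) ℚ) * u ^ (a + 1) * v ^ (i - 2 * a))
          * ((((m - i).choose (2 * b) * catalan b : ℕ) : MvPolynomial (Fin 2) ℚ) * u ^ (b + 1) * v ^ (m - i - 2 * b)) := by
        refine Finset.sum_congr rfl fun i hi => ?_
        rw [mem_range] at hi
        rw [PP_eq i (m + 1) (by omega), PP_eq (m - i) (m + 1) (by omega), Finset.sum_mul_sum]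
    _ = ∑ a ∈ range (m + 1), ∑ b ∈ range (m + 1), ∑ i ∈ range (m + 1),
          (((i.choose (2 * a) * catalan a : ℕ) : MvPolynomial (Fin 2) ℚ) * u ^ (a + 1) * v ^ (i - 2 * a))
          * ((((m - i).choose (2 * b) * catalan b : ℕ) : MvPolynomial (Fin 2) ℚ) * u ^ (b + 1) * v ^ (m - i - 2 * b)) := by
        rw [Finset.sum_comm]
        exact Finset.sum_congr rfl fun a _ => Finset.sum_comm
    _ = ∑ a ∈ range (m + 1), ∑ b ∈ range (m + 1),
          (((m + 1).choose (2 * (a + b) + 1) * (catalan a * catalan b) : ℕ) : MvPolynomial (Fin 2) ℚ)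
            * u ^ (a + b + 2) * v ^ (m - 2 * (a + b)) := by
        refine Finset.sum_congr rfl fun a _ => Finset.sum_congr rfl fun b _ => ?_
        have hterm : ∀ i ∈ range (m + 1),
            (((i.choose (2 * a) * catalan a : ℕ) : MvPolynomial (Fin 2) ℚ) * u ^ (a + 1) * v ^ (i - 2 * a))
            * ((((m - i).choose (2 * b) * catalan b : ℕ) : MvPolynomial (Fin 2) ℚ) * u ^ (b + 1) * v ^ (m - i - 2 * b))
            = ((i.choose (2 * a) * (m - i).choose (2 * b) : ℕ) : MvPolynomial (Fin 2) ℚ)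
              * (((catalan a * catalan b : ℕ) : MvPolynomial (Fin 2) ℚ)
              * (u ^ (a + b + 2) * v ^ (m - 2 * (a + b)))) := by
          intro i hi
          rw [mem_range] at hi
          by_cases h : 2 * a ≤ i ∧ 2 * b ≤ m - i
          · have e1 : m - 2 * (a + b) = (i - 2 * a) + (m - i - 2 * b) := by omega
            rw [e1, pow_add]
            push_cast
            ring
          · rcases not_and_or.mp h with h' | h'
            · rw [Nat.choose_eq_zero_of_lt (by omega : i < 2 * a)]
              simp
            · rw [Nat.choose_eq_zero_of_lt (by omega : m - i < 2 * b)]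
              simp
        rw [Finset.sum_congr rfl hterm, ← Finset.sum_mul, ← Nat.cast_sum, key a b]
        push_cast
        ring
    _ = ∑ c ∈ range (m + 1), ∑ a ∈ range (c + 1),
          (((m + 1).choose (2 * (a + (c - a)) + 1) * (catalan a * catalan (c - a)) : ℕ) : MvPolynomial (Fin 2) ℚ)
            * u ^ (a + (c - a) + 2) * v ^ (m - 2 * (a + (c - a))) := by
        refine tri (m + 1) _ fun a b hab => ?_
        rw [Nat.choose_eq_zero_of_lt (by omega : m + 1 < 2 * (a + b) + 1)]
        simp
    _ = ∑ c ∈ range (m + 1),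
          (((m + 1).choose (2 * c + 1) * catalan (c + 1) : ℕ) : MvPolynomial (Fin 2) ℚ)
            * u ^ (c + 2) * v ^ (m - 2 * c) := by
        refine Finset.sum_congr rfl fun c hc => ?_
        have hterm : ∀ a ∈ range (c + 1),
            (((m + 1).choose (2 * (a + (c - a)) + 1) * (catalan a * catalan (c - a)) : ℕ) : MvPolynomial (Fin 2) ℚ)
              * u ^ (a + (c - a) + 2) * v ^ (m - 2 * (a + (c - a)))
            = ((catalan a * catalan (c - a) : ℕ) : MvPolynomial (Fin 2) ℚ)
              * ((((m + 1).choose (2 * c + 1) : ℕ) : MvPolynomial (Fin 2) ℚ)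
              * (u ^ (c + 2) * v ^ (m - 2 * c))) := by
          intro a ha
          rw [mem_range] at ha
          have e : a + (c - a) = c := by omega
          rw [e]
          push_cast
          ring
        rw [Finset.sum_congr rfl hterm, ← Finset.sum_mul, ← Nat.cast_sum, ← catalan_succ_range]
        push_cast
        ring

lemma mainrec (m : ℕ) :
    PP (m + 2) = MvPolynomial.X 1 * PP (m + 1) + ∑ i ∈ range (m + 1), PP i * PP (m - i) := by
  set u : MvPolynomial (Fin 2) ℚ := MvPolynomial.X 0
  set v : MvPolynomial (Fin 2) ℚ := MvPolynomial.X 1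
  have hvP : v * PP (m + 1) = ∑ k ∈ range (m + 2),
      (((m + 1).choose (2 * k) * catalan k : ℕ) : MvPolynomial (Fin 2) ℚ)
        * u ^ (k + 1) * v ^ (m + 2 - 2 * k) := by
    rw [PP_eq (m + 1) (m + 2) (by omega), Finset.mul_sum]
    refine Finset.sum_congr rfl fun k hk => ?_
    by_cases h : 2 * k ≤ m + 1
    · have e : m + 2 - 2 * k = (m + 1 - 2 * k) + 1 := by omega
      rw [e, pow_succ]
      ring
    · rw [Nat.choose_eq_zero_of_lt (by omega : m + 1 < 2 * k)]
      simp
  rw [hvP, conv m, PP_eq (m + 2) (m + 2) (by omega)]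
  rw [Finset.sum_range_succ' _ (m + 1), Finset.sum_range_succ'
    (fun k => (((m + 1).choose (2 * k) * catalan k : ℕ) : MvPolynomial (Fin 2) ℚ)
        * u ^ (k + 1) * v ^ (m + 2 - 2 * k)) (m + 1)]
  have hterm : ∀ c ∈ range (m + 1),
      (((m + 2).choose (2 * (c + 1)) * catalan (c + 1) : ℕ) : MvPolynomial (Fin 2) ℚ)
        * u ^ (c + 1 + 1) * v ^ (m + 2 - 2 * (c + 1))
      = (((m + 1).choose (2 * (c + 1)) * catalan (c + 1) : ℕ) : MvPolynomial (Fin 2) ℚ)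
          * u ^ (c + 1 + 1) * v ^ (m + 2 - 2 * (c + 1))
        + (((m + 1).choose (2 * c + 1) * catalan (c + 1) : ℕ) : MvPolynomial (Fin 2) ℚ)
          * u ^ (c + 2) * v ^ (m - 2 * c) := by
    intro c hc
    have e1 : m + 2 - 2 * (c + 1) = m - 2 * c := by omega
    have e2 : 2 * (c + 1) = (2 * c + 1) + 1 := by omega
    rw [e1, e2, Nat.choose_succ_succ (m + 1) (2 * c + 1)]
    push_cast
    ring
  rw [Finset.sum_congr rfl hterm, Finset.sum_add_distrib]
  simp only [Nat.mul_zero, Nat.choose_zero_right, Nat.sub_zero]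
  ring


lemma PP_zero : PP 0 = MvPolynomial.X 0 := by
  simp [PP]

lemma PP_one : PP 1 = MvPolynomial.X 0 * MvPolynomial.X 1 := by
  simp [PP]

/-- F satisfies the algebraic equation q² F² + (vq - 1) F + u = 0. -/
theorem motzkinGF_algebraic :
    PowerSeries.X ^ 2 * motzkinGF ^ 2
      + (PowerSeries.C (MvPolynomial.X 1) * PowerSeries.X - 1) * motzkinGF
      + PowerSeries.C (MvPolynomial.X 0) = 0 := by
  have hco : ∀ k, (PowerSeries.coeff k) motzkinGF = PP k := fun k => by
    rw [motzkinGF, PowerSeries.coeff_mk]; rfl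
  apply PowerSeries.ext
  intro n
  rw [map_zero, map_add, map_add, PowerSeries.coeff_C, sub_mul, one_mul, map_sub, hco,
    mul_assoc, PowerSeries.coeff_C_mul, PowerSeries.coeff_X_pow_mul']
  match n with
  | 0 =>
    simp only [PowerSeries.coeff_zero_eq_constantCoeff_apply, map_mul, PowerSeries.constantCoeff_X,
      zero_mul, if_neg (by omega : ¬ (2:ℕ) ≤ 0), if_pos rfl]
    rw [PP_zero]
    simp
  | 1 =>
    rw [if_neg (by omega : ¬ (2:ℕ) ≤ 1), PowerSeries.coeff_succ_X_mul, hco, PP_one, PP_zero]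
    simp
    ring
  | (m + 2) =>
    rw [if_pos (by omega : (2:ℕ) ≤ m + 2), if_neg (by omega : ¬ m + 2 = 0),
      PowerSeries.coeff_succ_X_mul, hco]
    have h2 : (PowerSeries.coeff (m + 2 - 2)) (motzkinGF ^ 2)
        = ∑ i ∈ Finset.range (m + 1), PP i * PP (m - i) := by
      rw [show m + 2 - 2 = m from rfl, sq, PowerSeries.coeff_mul,
        Finset.Nat.sum_antidiagonal_eq_sum_range_succ_mk]
      exact Finset.sum_congr rfl fun i _ => by rw [hco, hco]
    rw [h2, mainrec m]
    ring
end

section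
/- For n ≥ 0, Coker's formula in two-variable form: N_{n+1}(x) = M_n(x; 1+x), where M_n(u;v) = \sum_{k=0}^{\lfloor n/2 \rfloor} binom(n,2k) C_k u^{k+1} v^{n-2k}. -/
/-- The two-variable Motzkin polynomial M_n(u;v). -/
def motzkinPoly (n : ℕ) (u v : ℚ) : ℚ :=
  ∑ k ∈ Finset.range (n / 2 + 1),
    (n.choose (2 * k) * catalan k : ℚ) * u ^ (k + 1) * v ^ (n - 2 * k)

/-!
Expanding `(1 + x) ^ (n - 2k)` binomially, the coefficient of `x ^ (i + 1)` in `M_n(x; 1 + x)` is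
`∑ₖ C(n, 2k) Cₖ C(n - 2k, i - k) = ∑ₖ n! / (k! (k+1)! (i-k)! (n-i-k)!)`.
Multiplied by `n + 1`, the `k`-th term factors as `C(n+1, i) C(i, i-k) C(n+1-i, k+1)`, so by
Vandermonde the sum is `C(n+1, i) C(n+1, i+1) / (n + 1)`, the Narayana coefficient of `x ^ (i + 1)`.
-/

open Finset Nat Polynomial

theorem cast_catalan (k : ℕ) : (catalan k : ℚ) = (2 * k)! / (k ! * (k + 1)!) := by
  have h : ((k + 1 : ℕ) : ℚ) * catalan k = (k + k).choose k := by
    rw [← two_mul, ← centralBinom_eq_two_mul_choose]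
    exact_mod_cast succ_mul_catalan_eq_centralBinom k
  rw [cast_add_choose, ← two_mul] at h
  rw [eq_div_iff (by positivity), factorial_succ]
  field_simp at h
  push_cast at h ⊢
  linear_combination h

theorem add_one_mul_choose_mul_catalan_mul_choose {n i k : ℕ} (hki : k ≤ i) :
    (n + 1 : ℚ) * (n.choose (2 * k) * catalan k * (n - 2 * k).choose (i - k))
      = (n + 1).choose i * ((n + 1 - i).choose (k + 1) * i.choose (i - k)) := by
  obtain ⟨e, rfl⟩ := Nat.exists_eq_add_of_le hki
  rcases le_or_gt (k + e + k) n with hn | hn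
  · obtain ⟨d, rfl⟩ := Nat.exists_eq_add_of_le hn
    rw [show k + e + k + d = 2 * k + (e + d) by ring, Nat.add_sub_cancel_left,
      Nat.add_sub_cancel_left, show 2 * k + (e + d) + 1 - (k + e) = k + 1 + d by omega,
      cast_add_choose, cast_add_choose, cast_add_choose, cast_catalan,
      cast_choose ℚ (show k + e ≤ 2 * k + (e + d) + 1 by omega),
      cast_choose ℚ (show e ≤ k + e by omega), Nat.add_sub_cancel,
      show 2 * k + (e + d) + 1 - (k + e) = k + 1 + d by omega]
    push_cast [factorial_succ]
    field_simp
  · have hrhs : (n + 1 - (k + e)).choose (k + 1) = 0 := choose_eq_zero_of_lt (by omega)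
    have hlhs : (n.choose (2 * k) : ℚ) * (n - 2 * k).choose (k + e - k) = 0 := by
      rcases le_or_gt (2 * k) n with h | h
      · rw [choose_eq_zero_of_lt (show n - 2 * k < k + e - k by omega), cast_zero, mul_zero]
      · rw [choose_eq_zero_of_lt h, cast_zero, zero_mul]
    rw [hrhs, mul_right_comm _ (catalan k : ℚ), hlhs]
    simp

theorem sum_range_choose_succ_mul_choose_sub (m i : ℕ) :
    ∑ k ∈ range (i + 1), m.choose (k + 1) * i.choose (i - k) = (m + i).choose (i + 1) := by
  rw [add_choose_eq, Nat.sum_antidiagonal_eq_sum_range_succ (fun a b => m.choose a * i.choose b),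
    sum_range_succ' _ (i + 1)]
  simp

theorem add_one_mul_sum_choose_mul_catalan_mul_choose (n i : ℕ) :
    (n + 1 : ℚ) *
        ∑ k ∈ range (i + 1), (n.choose (2 * k) * catalan k * (n - 2 * k).choose (i - k) : ℚ)
      = (n + 1).choose (i + 1) * (n + 1).choose i := by
  rw [mul_sum, sum_congr rfl fun k hk ↦
    add_one_mul_choose_mul_catalan_mul_choose (Nat.lt_succ_iff.mp (mem_range.mp hk)), ← mul_sum]
  rcases le_or_gt i (n + 1) with hi | hi
  · rw [mul_comm]
    exact_mod_cast congrArg (· * (n + 1).choose i)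
      ((sum_range_choose_succ_mul_choose_sub (n + 1 - i) i).trans (by rw [Nat.sub_add_cancel hi]))
  · simp [choose_eq_zero_of_lt hi]

theorem sum_choose_mul_catalan_X_pow_mul_one_add_X_pow (n : ℕ) :
    ∑ k ∈ range (n / 2 + 1),
        C (n.choose (2 * k) * catalan k : ℚ) * X ^ (k + 1) * (1 + X) ^ (n - 2 * k)
      = ∑ k ∈ Icc 1 (n + 1),
          C (((n + 1).choose k * (n + 1).choose (k - 1) : ℚ) / (n + 1)) * X ^ k := by
  ext j
  simp only [finsetSum_coeff, mul_assoc, coeff_C_mul, coeff_X_pow_mul', coeff_one_add_X_pow,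
    coeff_X_pow, mul_ite, mul_one, mul_zero]
  rcases j with _ | i
  · simp
  rw [sum_ite_eq]
  simp only [Nat.add_le_add_iff_right, Nat.add_sub_add_right, ← mul_assoc, ← sum_filter]
  rw [sum_subset (s₂ := range (i + 1)) ?sub ?vanish]
  case sub => intro k; simp only [mem_filter, mem_range]; omega
  case vanish =>
    intro k hk hk'
    simp only [mem_filter, mem_range, not_and, not_le] at hk hk'
    rw [choose_eq_zero_of_lt (show n < 2 * k by omega)]
    simp
  rw [eq_div_of_mul_eq (by positivity)
    ((mul_comm _ _).trans (add_one_mul_sum_choose_mul_catalan_mul_choose n i))]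
  split_ifs with hi
  · rw [Nat.add_sub_cancel]
  · rw [choose_eq_zero_of_lt (by simp only [mem_Icc] at hi; omega)]
    simp

/-- Coker's formula in two-variable form: N_{n+1}(x) = M_n(x; 1+x). -/
theorem coker_two_variable (n : ℕ) (x : ℚ) :
    ∑ k ∈ Finset.Icc 1 (n + 1),
        (((n + 1).choose k * (n + 1).choose (k - 1) : ℚ) / (n + 1)) * x ^ k
      = motzkinPoly n x (1 + x) := by
  simpa [eval_finsetSum, motzkinPoly] using
    congrArg (eval x) (sum_choose_mul_catalan_X_pow_mul_one_add_X_pow n).symm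
end

section
/- For n ≥ 0 and each j with 1 ≤ j ≤ n+2, the following identity between coefficients holds: \sum_{i=1}^{\lfloor (n+2)/2 \rfloor} \sum_{j=0}^{n+2-2i} (1/(n+1)) binom(n+1,i) binom(n+1-i,j) binom(n+1-i-j,i-1) x_1^i x_2^j = \sum_{k=0}^{\lfloor n/2 \rfloor} C_k binom(n,2k) x_1^{k+1} (1+x_2)^{n-2k}, as polynomials in x_1, x_2. -/
/-!
Put `i = k + 1` and expand `(1 + x₂)^(n - 2k)` by the binomial theorem; the identity then holds
coefficientwise. After `(n+1).choose (k+1) = (n+1)/(k+1) · n.choose k` and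
`(k+1) · C_k = (2k).choose k`, what remains is that choosing disjoint subsets of sizes `k`, `j`, `k`
of an `n`-set in two different orders gives the same count.
-/

namespace Nat

theorem choose_mul_choose_sub_comm (n a b : ℕ) :
    n.choose a * (n - a).choose b = n.choose b * (n - b).choose a := by
  have hab := choose_mul (n := n) (k := a + b) (s := a) (Nat.le_add_right a b)
  have hba := choose_mul (n := n) (k := a + b) (s := b) (Nat.le_add_left b a)
  rw [Nat.add_sub_cancel_left, choose_symm_add] at hab
  rw [Nat.add_sub_cancel] at hba
  rw [← hab, hba]

theorem choose_mul_choose_mul_choose_eq (n k j : ℕ) :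
    n.choose k * (n - k).choose j * (n - k - j).choose k
      = n.choose (2 * k) * (2 * k).choose k * (n - 2 * k).choose j := by
  have hsplit : n.choose (2 * k) * (2 * k).choose k = n.choose k * (n - k).choose k := by
    rw [choose_mul (by omega), two_mul, Nat.add_sub_cancel]
  rw [hsplit, mul_assoc, mul_assoc, choose_mul_choose_sub_comm (n - k) j k,
    show n - k - k = n - 2 * k by omega]

end Nat

theorem refined_coker_coeff (n k j : ℕ) :
    ((n + 1).choose (k + 1) * (n - k).choose j * (n - k - j).choose k : ℚ) / (n + 1)
      = catalan k * n.choose (2 * k) * (n - 2 * k).choose j := by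
  have hpascal : ((n + 1).choose (k + 1) * (k + 1) : ℚ) = (n + 1) * n.choose k := by
    exact_mod_cast (Nat.add_one_mul_choose_eq n k).symm
  have hcat : ((k + 1) * catalan k : ℚ) = (2 * k).choose k := by
    exact_mod_cast succ_mul_catalan_eq_centralBinom k
  have htri : (n.choose k * (n - k).choose j * (n - k - j).choose k : ℚ)
      = n.choose (2 * k) * (2 * k).choose k * (n - 2 * k).choose j := by
    exact_mod_cast Nat.choose_mul_choose_mul_choose_eq n k j
  rw [div_eq_iff (by positivity)]
  refine mul_right_cancel₀ (b := (k + 1 : ℚ)) (by positivity) ?_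
  linear_combination ((n - k).choose j * (n - k - j).choose k : ℚ) * hpascal + (n + 1 : ℚ) * htri
    - ((n + 1) * n.choose (2 * k) * (n - 2 * k).choose j : ℚ) * hcat

/-- Chen–Deutsch–Elizalde's refinement of Coker's formula, as an identity of bivariate
polynomials over ℚ. -/
theorem refined_coker (n : ℕ) (x₁ x₂ : ℚ) :
    ∑ i ∈ Finset.Icc 1 ((n + 2) / 2), ∑ j ∈ Finset.range (n + 2 - 2 * i + 1),
        (((n + 1).choose i * ((n + 1) - i).choose j * ((n + 1) - i - j).choose (i - 1) : ℚ)
            / (n + 1)) * x₁ ^ i * x₂ ^ j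
      = ∑ k ∈ Finset.range (n / 2 + 1),
          (catalan k * n.choose (2 * k) : ℚ) * x₁ ^ (k + 1) * (1 + x₂) ^ (n - 2 * k) := by
  rw [show (n + 2) / 2 = n / 2 + 1 by omega, ← Finset.Ico_add_one_right_eq_Icc,
    Finset.sum_Ico_eq_sum_range, Nat.add_sub_cancel]
  refine Finset.sum_congr rfl fun k _ => ?_
  rw [add_comm 1 x₂, add_pow, Finset.mul_sum, add_comm 1 k,
    show n + 2 - 2 * (k + 1) + 1 = n - 2 * k + 1 by omega]
  refine Finset.sum_congr rfl fun j _ => ?_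
  rw [Nat.add_sub_add_right, Nat.add_sub_cancel, refined_coker_coeff, one_pow, mul_one]
  ring
end

section
/- For n ≥ 1 and 1 ≤ i, with P(n,i,j) = (1/n) binom(n,i) binom(n-i,j) binom(n-i-j,i-1), we have \sum_{i,j} P(n,i,j) = C_n and \sum_{i,j} P(n,i,j) x^{i+j} = N_n(x), the Narayana polynomial. -/
open Finset

/-- Vandermonde-type sum: ∑_{i=1}^{k} C(k,i) C(m,i-1) = C(k+m, k-1). -/
lemma vand_aux (k m : ℕ) (hk : 1 ≤ k) :
    ∑ i ∈ Finset.Icc 1 k, k.choose i * m.choose (i - 1) = (k + m).choose (k - 1) := by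
  rw [Nat.add_choose_eq]
  refine Finset.sum_nbij' (fun i => (k - i, i - 1)) (fun p => p.2 + 1) ?_ ?_ ?_ ?_ ?_
  · intro i hi
    simp only [Finset.mem_Icc] at hi
    simp only [Finset.HasAntidiagonal.mem_antidiagonal]
    omega
  · intro p hp
    simp only [Finset.HasAntidiagonal.mem_antidiagonal] at hp
    simp only [Finset.mem_Icc]
    omega
  · intro i hi
    simp only [Finset.mem_Icc] at hi
    show i - 1 + 1 = i
    omega
  · intro p hp
    simp only [Finset.HasAntidiagonal.mem_antidiagonal] at hp
    have : k - (p.2 + 1) = p.1 := by omega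
    simp [this]
  · intro i hi
    simp only [Finset.mem_Icc] at hi
    show k.choose i * m.choose (i - 1) = k.choose (k - i) * m.choose (i - 1)
    rw [Nat.choose_symm hi.2]

/-- Per-degree identity: ∑_{i=1}^{k} C(n,i) C(n-i,k-i) C(n-k,i-1) = C(n,k) C(n,k-1). -/
lemma perk_aux (n k : ℕ) (hk : 1 ≤ k) (hkn : k ≤ n) :
    ∑ i ∈ Finset.Icc 1 k, n.choose i * (n - i).choose (k - i) * (n - k).choose (i - 1)
      = n.choose k * n.choose (k - 1) := by
  have h1 : ∀ i ∈ Finset.Icc 1 k,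
      n.choose i * (n - i).choose (k - i) * (n - k).choose (i - 1)
        = n.choose k * (k.choose i * (n - k).choose (i - 1)) := by
    intro i hi
    simp only [Finset.mem_Icc] at hi
    rw [← Nat.choose_mul (n := n) hi.2, Nat.mul_assoc]
  rw [Finset.sum_congr rfl h1, ← Finset.mul_sum, vand_aux k (n - k) hk,
    Nat.add_sub_cancel' hkn]

/-- With P(n,i,j) = (1/n) C(n,i) C(n-i,j) C(n-i-j,i-1):
∑_{i,j} P(n,i,j) = C_n and ∑_{i,j} P(n,i,j) x^{i+j} = N_n(x). -/
theorem sum_P_eq_catalan_and_narayana (n : ℕ) (hn : 1 ≤ n) :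
    (∑ i ∈ Finset.Icc 1 n, ∑ j ∈ Finset.range (n + 1),
        ((n.choose i * (n - i).choose j * (n - i - j).choose (i - 1) : ℚ) / n)
      = (catalan n : ℚ))
    ∧ ∀ x : ℚ,
        ∑ i ∈ Finset.Icc 1 n, ∑ j ∈ Finset.range (n + 1),
            ((n.choose i * (n - i).choose j * (n - i - j).choose (i - 1) : ℚ) / n) * x ^ (i + j)
          = ∑ k ∈ Finset.Icc 1 n, ((n.choose k * n.choose (k - 1) : ℚ) / n) * x ^ k := by
  have hn0 : (n : ℚ) ≠ 0 := by exact Nat.cast_ne_zero.mpr (by omega)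
  have key : ∀ x : ℚ,
        ∑ i ∈ Finset.Icc 1 n, ∑ j ∈ Finset.range (n + 1),
            ((n.choose i * (n - i).choose j * (n - i - j).choose (i - 1) : ℚ) / n) * x ^ (i + j)
          = ∑ k ∈ Finset.Icc 1 n, ((n.choose k * n.choose (k - 1) : ℚ) / n) * x ^ k := by
    intro x
    -- rewrite RHS using the per-degree identity and unfold into a sigma sum
    have hR : ∀ k ∈ Finset.Icc 1 n, ((n.choose k * n.choose (k - 1) : ℚ) / n) * x ^ k
        = ∑ i ∈ Finset.Icc 1 k,
            ((n.choose i * (n - i).choose (k - i) * (n - k).choose (i - 1) : ℚ) / n) * x ^ k := by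
      intro k hk
      simp only [Finset.mem_Icc] at hk
      rw [← Finset.sum_mul, ← Finset.sum_div]
      congr 2
      exact_mod_cast (perk_aux n k hk.1 hk.2).symm
    -- rewrite LHS as a sum over a product, then drop vanishing terms
    rw [← Finset.sum_product']
    rw [Finset.sum_congr rfl hR, Finset.sum_sigma']
    rw [← Finset.sum_filter_of_ne (p := fun p : ℕ × ℕ => p.1 + p.2 ≤ n) (by
      intro p hp hne
      by_contra hgt
      push_neg at hgt
      apply hne
      simp only [Finset.mem_product, Finset.mem_Icc, Finset.mem_range] at hp
      have : (n - p.1).choose p.2 = 0 := Nat.choose_eq_zero_of_lt (by omega)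
      rw [this]
      simp)]
    refine Finset.sum_nbij' (fun p => ⟨p.1 + p.2, p.1⟩)
      (fun q => (q.2, q.1 - q.2)) ?_ ?_ ?_ ?_ ?_
    · intro p hp
      simp only [Finset.mem_filter, Finset.mem_product, Finset.mem_Icc, Finset.mem_range] at hp
      simp only [Finset.mem_sigma, Finset.mem_Icc]
      omega
    · intro q hq
      simp only [Finset.mem_sigma, Finset.mem_Icc] at hq
      simp only [Finset.mem_filter, Finset.mem_product, Finset.mem_Icc, Finset.mem_range]
      omega
    · intro p hp
      simp only [Finset.mem_filter, Finset.mem_product, Finset.mem_Icc, Finset.mem_range] at hp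
      simp
    · intro q hq
      simp only [Finset.mem_sigma, Finset.mem_Icc] at hq
      have : q.2 + (q.1 - q.2) = q.1 := by omega
      exact Sigma.ext (by simpa using this) (by simp)
    · intro p hp
      simp only [Finset.mem_filter, Finset.mem_product, Finset.mem_Icc, Finset.mem_range] at hp
      have h1 : p.1 + p.2 - p.1 = p.2 := by omega
      have h2 : n - p.1 - p.2 = n - (p.1 + p.2) := by omega
      simp [h1, h2]
  refine ⟨?_, key⟩
  have h1 := key 1
  simp only [one_pow, mul_one] at h1
  rw [h1, ← Finset.sum_div]
  have hsum : ∑ k ∈ Finset.Icc 1 n, (n.choose k * n.choose (k - 1)) = (n + n).choose (n - 1) :=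
    vand_aux n n hn
  have hcat : (n + n).choose (n - 1) = n * catalan n := by
    have hc := succ_mul_catalan_eq_centralBinom n
    have h2 := Nat.choose_succ_right_eq (2 * n) (n - 1)
    have e1 : n - 1 + 1 = n := by omega
    have e2 : 2 * n - (n - 1) = n + 1 := by omega
    rw [e1, e2] at h2
    have h3 : Nat.centralBinom n = (2 * n).choose n := rfl
    have h4 : n + n = 2 * n := by omega
    rw [h4]
    refine Nat.eq_of_mul_eq_mul_right (show 0 < n + 1 by omega) ?_
    calc (2 * n).choose (n - 1) * (n + 1) = (2 * n).choose n * n := h2.symm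
      _ = ((n + 1) * catalan n) * n := by rw [hc, h3]
      _ = n * catalan n * (n + 1) := by ring
  have hs : (∑ k ∈ Finset.Icc 1 n, ((n.choose k : ℚ) * (n.choose (k - 1) : ℚ)))
      = ((n * catalan n : ℕ) : ℚ) := by
    rw [← hcat, ← hsum]
    push_cast
    rfl
  rw [hs]
  push_cast
  rw [mul_comm, mul_div_assoc, div_self hn0, mul_one]
end

section
/- For n ≥ 0, the Narayana polynomial satisfies N_{n+1}(x) = \sum_{k=0}^{n} binom(n,k) M_k(x;x), where M_k(u;v) = \sum_{j=0}^{\lfloor k/2 \rfloor} binom(k,2j) C_j u^{j+1} v^{k-2j}. -/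
open Finset

namespace Nat

theorem choose_two_mul_mul_choose_mul_centralBinom {n m j : ℕ} (h : j ≤ m) :
    n.choose (2 * j) * (n - 2 * j).choose (m - j) * j.centralBinom
      = n.choose m * m.choose j * (n - m).choose j := by
  have h₁ : n.choose (m + j) * (m + j).choose (2 * j)
      = n.choose (2 * j) * (n - 2 * j).choose (m - j) := by
    rw [Nat.choose_mul (by omega), show m + j - 2 * j = m - j by omega]
  have h₂ : (m + j).choose (2 * j) * (2 * j).choose j = (m + j).choose j * m.choose j := by
    rw [Nat.choose_mul (by omega), show m + j - j = m by omega, show 2 * j - j = j by omega]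
  have h₃ : n.choose (m + j) * (m + j).choose m = n.choose m * (n - m).choose j := by
    rw [Nat.choose_mul (by omega), Nat.add_sub_cancel_left]
  rw [centralBinom_eq_two_mul_choose, ← h₁, mul_assoc, h₂, ← mul_assoc, ← choose_symm_add, h₃]
  ring

theorem sum_range_choose_mul_choose_succ (m N : ℕ) :
    ∑ j ∈ range (m + 1), m.choose j * N.choose (j + 1) = (m + N).choose (m + 1) := by
  rw [Nat.add_comm m N, add_choose_eq,
    Finset.Nat.sum_antidiagonal_eq_sum_range_succ fun a b => N.choose a * m.choose b,
    sum_range_succ' fun k => N.choose k * m.choose (m + 1 - k)]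
  simp only [Nat.sub_zero, choose_succ_self, mul_zero, add_zero]
  refine sum_congr rfl fun j hj => ?_
  rw [Nat.add_sub_add_right, choose_symm (mem_range_succ_iff.mp hj), mul_comm]

theorem sub_add_one_mul_choose_mul_catalan {n m j : ℕ} (h : j ≤ m) :
    (n - m + 1) * (n.choose (2 * j) * (n - 2 * j).choose (m - j) * catalan j)
      = n.choose m * (m.choose j * (n - m + 1).choose (j + 1)) := by
  apply Nat.eq_of_mul_eq_mul_left j.succ_pos
  calc (j + 1) * ((n - m + 1) * (n.choose (2 * j) * (n - 2 * j).choose (m - j) * catalan j))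
      = (n - m + 1) *
          (n.choose (2 * j) * (n - 2 * j).choose (m - j) * ((j + 1) * catalan j)) := by
        ring
    _ = n.choose m * m.choose j * ((n - m + 1) * (n - m).choose j) := by
        rw [succ_mul_catalan_eq_centralBinom, choose_two_mul_mul_choose_mul_centralBinom h]; ring
    _ = (j + 1) * (n.choose m * (m.choose j * (n - m + 1).choose (j + 1))) := by
        rw [add_one_mul_choose_eq]; ring

theorem succ_mul_sum_choose_mul_catalan {n m : ℕ} (h : m ≤ n) :
    (n + 1) * ∑ j ∈ range (m + 1), n.choose (2 * j) * (n - 2 * j).choose (m - j) * catalan j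
      = (n + 1).choose (m + 1) * (n + 1).choose m := by
  apply Nat.eq_of_mul_eq_mul_left (show 0 < n - m + 1 by omega)
  have hsum : (n - m + 1) * ∑ j ∈ range (m + 1),
      n.choose (2 * j) * (n - 2 * j).choose (m - j) * catalan j
        = n.choose m * (n + 1).choose (m + 1) := by
    rw [mul_sum,
      sum_congr rfl fun j hj => sub_add_one_mul_choose_mul_catalan (mem_range_succ_iff.mp hj),
      ← mul_sum, sum_range_choose_mul_choose_succ, show m + (n - m + 1) = n + 1 by omega]
  calc (n - m + 1) * ((n + 1) * _) = n.choose m * (n + 1) * (n + 1).choose (m + 1) := by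
        rw [mul_left_comm, hsum]; ring
    _ = _ := by rw [choose_mul_succ_eq, show n + 1 - m = n - m + 1 by omega]; ring

end Nat

theorem add_one_pow_eq_sum_range {R : Type*} [CommSemiring R] (x : R) {N L : ℕ} (h : N < L) :
    (x + 1) ^ N = ∑ i ∈ range L, (N.choose i : R) * x ^ i := by
  rw [add_pow, sum_subset (range_subset_range.2 h) fun i _ hi => ?_]
  · exact sum_congr rfl fun i _ => by rw [one_pow, mul_one, mul_comm]
  · rw [Nat.choose_eq_zero_of_lt (by simpa using hi), Nat.cast_zero, mul_zero]

theorem sum_range_choose_mul_choose_mul_pow {R : Type*} [CommSemiring R] (n a : ℕ) (v : R) :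
    ∑ k ∈ range (n + 1), (n.choose k * k.choose a : R) * v ^ (k - a)
      = n.choose a * (v + 1) ^ (n - a) := by
  rcases lt_or_ge n a with h | h
  · rw [Nat.choose_eq_zero_of_lt h, Nat.cast_zero, zero_mul]
    refine sum_eq_zero fun k hk => ?_
    rw [Nat.choose_eq_zero_of_lt (lt_of_le_of_lt (mem_range_succ_iff.mp hk) h : k < a),
      Nat.cast_zero, mul_zero, zero_mul]
  obtain ⟨b, rfl⟩ := Nat.exists_eq_add_of_le h
  rw [add_assoc, sum_range_add, sum_eq_zero fun k hk => ?_, zero_add, Nat.add_sub_cancel_left,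
    add_one_pow_eq_sum_range v (Nat.lt_succ_self b), mul_sum]
  · refine sum_congr rfl fun i _ => ?_
    rw [← Nat.cast_mul, Nat.choose_mul (Nat.le_add_right a i)]
    simp only [Nat.add_sub_cancel_left]
    push_cast; ring
  · rw [Nat.choose_eq_zero_of_lt (mem_range.mp hk : k < a), Nat.cast_zero, mul_zero, zero_mul]

theorem motzkinPoly_eq_sum_range {n N : ℕ} (h : n / 2 ≤ N) (u v : ℚ) :
    motzkinPoly n u v =
      ∑ j ∈ range (N + 1), (n.choose (2 * j) * catalan j : ℚ) * u ^ (j + 1) * v ^ (n - 2 * j) := by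
  refine sum_subset (range_subset_range.2 (by omega)) fun j _ hj => ?_
  rw [Nat.choose_eq_zero_of_lt (by rw [mem_range] at hj; omega : n < 2 * j)]
  simp

theorem sum_choose_mul_motzkinPoly (n : ℕ) (u v : ℚ) :
    ∑ k ∈ range (n + 1), (n.choose k : ℚ) * motzkinPoly k u v = motzkinPoly n u (v + 1) := by
  calc ∑ k ∈ range (n + 1), (n.choose k : ℚ) * motzkinPoly k u v
      = ∑ k ∈ range (n + 1), ∑ j ∈ range (n + 1),
          (n.choose k * k.choose (2 * j) : ℚ) * v ^ (k - 2 * j) * (catalan j * u ^ (j + 1)) := by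
        refine sum_congr rfl fun k hk => ?_
        rw [motzkinPoly_eq_sum_range (N := n) (by rw [mem_range] at hk; omega), mul_sum]
        exact sum_congr rfl fun _ _ => by ring
    _ = ∑ j ∈ range (n + 1),
          (n.choose (2 * j) : ℚ) * (v + 1) ^ (n - 2 * j) * (catalan j * u ^ (j + 1)) := by
        rw [sum_comm]
        simp only [← sum_mul, sum_range_choose_mul_choose_mul_pow]
    _ = motzkinPoly n u (v + 1) := by
        rw [motzkinPoly_eq_sum_range (Nat.div_le_self n 2)]
        exact sum_congr rfl fun _ _ => by ring

theorem motzkinPoly_add_one_eq_sum (n : ℕ) (x : ℚ) :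
    motzkinPoly n x (x + 1) = ∑ m ∈ range (n + 1),
      ((∑ j ∈ range (m + 1), n.choose (2 * j) * (n - 2 * j).choose (m - j) * catalan j : ℕ) : ℚ)
        * x ^ (m + 1) := by
  let f : ℕ → ℕ → ℚ := fun j i =>
    (n.choose (2 * j) * catalan j : ℚ) * x ^ (j + 1) * ((n - 2 * j).choose i * x ^ i)
  calc motzkinPoly n x (x + 1) = ∑ j ∈ range (n + 1), ∑ i ∈ range (n + 1 - j), f j i := by
        rw [motzkinPoly_eq_sum_range (Nat.div_le_self n 2)]
        refine sum_congr rfl fun j hj => ?_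
        have hj : n - 2 * j < n + 1 - j := by rw [mem_range] at hj; omega
        rw [add_one_pow_eq_sum_range x hj, mul_sum]
    _ = ∑ m ∈ range (n + 1), ∑ j ∈ range (m + 1), f j (m - j) := (sum_range_diag_flip _ f).symm
    _ = _ := by
        refine sum_congr rfl fun m _ => ?_
        rw [Nat.cast_sum, sum_mul]
        refine sum_congr rfl fun j hj => ?_
        rw [show m + 1 = j + 1 + (m - j) by rw [mem_range] at hj; omega, pow_add]
        push_cast
        ring

/-- Lin–Kim: N_{n+1}(x) = ∑_{k=0}^{n} C(n,k) M_k(x;x). -/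
theorem narayana_eq_sum_motzkinPoly (n : ℕ) (x : ℚ) :
    ∑ k ∈ Finset.Icc 1 (n + 1),
        (((n + 1).choose k * (n + 1).choose (k - 1) : ℚ) / (n + 1)) * x ^ k
      = ∑ k ∈ Finset.range (n + 1), (n.choose k : ℚ) * motzkinPoly k x x := by
  rw [sum_choose_mul_motzkinPoly, motzkinPoly_add_one_eq_sum, ← Ico_add_one_right_eq_Icc,
    sum_Ico_eq_sum_range, Nat.add_sub_cancel]
  refine sum_congr rfl fun m hm => ?_
  rw [add_comm 1 m, Nat.add_sub_cancel, ← Nat.cast_mul,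
    ← Nat.succ_mul_sum_choose_mul_catalan (by simpa using hm)]
  push_cast
  field_simp
end

section
/- Let D be the derivation on the polynomial ring ℚ[t,u,v] determined by D(t) = t^2 v, D(u) = 2 t u v, D(v) = 4 t u. Then for all n ≥ 1, D^n(v/2) = (n+1)! · t^n · M_{n-1}(u;v), where M_m(u;v) = \sum_{k=0}^{\lfloor m/2 \rfloor} binom(m,2k) C_k u^{k+1} v^{m-2k}. -/
open MvPolynomial Finset


lemma catRel (j : ℕ) : (j + 2) * catalan (j + 1) = 2 * (2 * j + 1) * catalan j := by
  have h1 := succ_mul_catalan_eq_centralBinom (j + 1)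
  have h2 := Nat.succ_mul_centralBinom_succ j
  have h3 := succ_mul_catalan_eq_centralBinom j
  have key : (j + 1) * ((j + 2) * catalan (j + 1)) = (j + 1) * (2 * (2 * j + 1) * catalan j) := by
    calc (j + 1) * ((j + 2) * catalan (j + 1)) = (j + 1) * ((j + 1 + 1) * catalan (j + 1)) := by ring
    _ = (j + 1) * Nat.centralBinom (j + 1) := by rw [h1]
    _ = 2 * (2 * j + 1) * ((j + 1) * catalan j) := by rw [h2, h3]
    _ = (j + 1) * (2 * (2 * j + 1) * catalan j) := by ring
  exact Nat.eq_of_mul_eq_mul_left (by omega) key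

lemma coeffId (m k : ℕ) (hk : 1 ≤ k) :
    ((m : ℚ) + 3 + 2 * k) * (m.choose (2 * k) * catalan k)
      + 4 * ((m + 2 - 2 * k : ℕ) : ℚ) * (m.choose (2 * (k - 1)) * catalan (k - 1))
    = ((m : ℚ) + 3) * ((m + 1).choose (2 * k) * catalan k) := by
  obtain ⟨j, rfl⟩ := Nat.exists_eq_add_of_le hk
  rw [show 2 * (1 + j) = 2 * j + 2 by omega, show 1 + j - 1 = j by omega,
      show m + 2 - (2 * j + 2) = m - 2 * j by omega, show 1 + j = j + 1 by omega]
  have hPascal : ((m + 1).choose (2 * j + 2) : ℚ) = m.choose (2 * j + 1) + m.choose (2 * j + 2) := by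
    exact_mod_cast congrArg (Nat.cast (R := ℚ)) (Nat.choose_succ_succ' m (2 * j + 1))
  have hC : ((j : ℚ) + 2) * catalan (j + 1) = 2 * (2 * (j : ℚ) + 1) * catalan j := by
    exact_mod_cast congrArg (Nat.cast (R := ℚ)) (catRel j)
  rcases le_or_gt (2 * j + 1) m with hm | hm
  · have h0 := Nat.choose_succ_right_eq m (2 * j + 1)
    rw [show 2 * j + 1 + 1 = 2 * j + 2 by omega] at h0
    qify [hm] at h0
    have h1 := Nat.choose_succ_right_eq m (2 * j)
    qify [show 2 * j ≤ m by omega] at h1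
    have hsub : ((m - 2 * j : ℕ) : ℚ) = (m : ℚ) - 2 * j := by
      rw [Nat.cast_sub (by omega)]; push_cast; ring
    rw [hsub, hPascal]
    push_cast
    linear_combination (catalan (j + 1) : ℚ) * h0 - 4 * (catalan j : ℚ) * h1 - 2 * (m.choose (2 * j + 1) : ℚ) * hC
  · have hz1 : m.choose (2 * j + 2) = 0 := Nat.choose_eq_zero_of_lt (by omega)
    have hz2 : ((m - 2 * j : ℕ) : ℚ) * (m.choose (2 * j) : ℚ) = 0 := by
      rcases Nat.eq_or_lt_of_le (show m ≤ 2 * j by omega) with h' | h'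
      · rw [show m - 2 * j = 0 by omega]; simp
      · rw [Nat.choose_eq_zero_of_lt (by omega)]; simp
    have hz3 : (m + 1).choose (2 * j + 2) = 0 := Nat.choose_eq_zero_of_lt (by omega)
    rw [hz1, hz3]
    push_cast
    linear_combination 4 * (catalan j : ℚ) * hz2

open MvPolynomial Finset
open MvPolynomial Finset

-- extension of the sum range
lemma Mext (m N : ℕ) (h : m / 2 + 1 ≤ N) :
    (∑ k ∈ range (m / 2 + 1), (C (((m.choose (2 * k) * catalan k : ℕ)) : ℚ)
        * (X 1 : MvPolynomial (Fin 3) ℚ) ^ (k + 1) * (X 2) ^ (m - 2 * k)))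
    = ∑ k ∈ range N, (C (((m.choose (2 * k) * catalan k : ℕ)) : ℚ)
        * (X 1 : MvPolynomial (Fin 3) ℚ) ^ (k + 1) * (X 2) ^ (m - 2 * k)) := by
  apply Finset.sum_subset (Finset.range_subset_range.2 h)
  intro k _ hk
  rw [Finset.mem_range, not_lt] at hk
  rw [Nat.choose_eq_zero_of_lt (by omega)]
  simp
lemma sumId (m : ℕ) :
    (∑ k ∈ range (m + 2),
        C ((((m + 2 * k + 3) * (m.choose (2 * k) * catalan k) : ℕ)) : ℚ) *
          (X 0 : MvPolynomial (Fin 3) ℚ) ^ (m + 2) * X 1 ^ (k + 1) * X 2 ^ (m - 2 * k + 1))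
      + (∑ k ∈ range (m + 2),
        C (((4 * (m - 2 * k) * (m.choose (2 * k) * catalan k) : ℕ)) : ℚ) *
          (X 0 : MvPolynomial (Fin 3) ℚ) ^ (m + 2) * X 1 ^ (k + 2) * X 2 ^ (m - 2 * k - 1))
      = ∑ k ∈ range (m + 2),
        C ((((m + 3) * ((m + 1).choose (2 * k) * catalan k) : ℕ)) : ℚ) *
          (X 0 : MvPolynomial (Fin 3) ℚ) ^ (m + 2) * X 1 ^ (k + 1) * X 2 ^ (m + 1 - 2 * k) := by
  rw [Finset.sum_range_succ (n := m + 1) (f := fun k => C (((4 * (m - 2 * k) * (m.choose (2 * k) * catalan k) : ℕ)) : ℚ) *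
          (X 0 : MvPolynomial (Fin 3) ℚ) ^ (m + 2) * X 1 ^ (k + 2) * X 2 ^ (m - 2 * k - 1))]
  rw [show m - 2 * (m + 1) = 0 by omega]
  simp only [Nat.mul_zero, Nat.zero_mul, Nat.cast_zero, map_zero, zero_mul, add_zero]
  rw [Finset.sum_range_succ' (n := m + 1) (f := fun k => C ((((m + 2 * k + 3) * (m.choose (2 * k) * catalan k) : ℕ)) : ℚ) *
          (X 0 : MvPolynomial (Fin 3) ℚ) ^ (m + 2) * X 1 ^ (k + 1) * X 2 ^ (m - 2 * k + 1))]
  rw [Finset.sum_range_succ' (n := m + 1) (f := fun k => C ((((m + 3) * ((m + 1).choose (2 * k) * catalan k) : ℕ)) : ℚ) *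
          (X 0 : MvPolynomial (Fin 3) ℚ) ^ (m + 2) * X 1 ^ (k + 1) * X 2 ^ (m + 1 - 2 * k))]
  have base : (C ((((m + 2 * 0 + 3) * (m.choose (2 * 0) * catalan 0) : ℕ)) : ℚ) *
          (X 0 : MvPolynomial (Fin 3) ℚ) ^ (m + 2) * X 1 ^ (0 + 1) * X 2 ^ (m - 2 * 0 + 1))
      = (C ((((m + 3) * ((m + 1).choose (2 * 0) * catalan 0) : ℕ)) : ℚ) *
          (X 0 : MvPolynomial (Fin 3) ℚ) ^ (m + 2) * X 1 ^ (0 + 1) * X 2 ^ (m + 1 - 2 * 0)) := by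
    norm_num
  rw [add_right_comm, ← Finset.sum_add_distrib, base]
  congr 1
  apply Finset.sum_congr rfl
  intro k _
  -- goal: F1 (k+1) + A2 k = R (k+1)
  have hc := coeffId m (k + 1) (by omega)
  rw [show m + 2 - 2 * (k + 1) = m - 2 * k by omega, show k + 1 - 1 = k by omega] at hc
  rw [show m + 1 - 2 * (k + 1) = m - 2 * k - 1 by omega]
  rcases le_or_gt (2 * (k + 1)) m with hm | hm
  · rw [show m - 2 * (k + 1) + 1 = m - 2 * k - 1 by omega]
    have hc' : (C ((((m + 2 * (k + 1) + 3) * (m.choose (2 * (k + 1)) * catalan (k + 1)) : ℕ)) : ℚ)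
          + C (((4 * (m - 2 * k) * (m.choose (2 * k) * catalan k) : ℕ)) : ℚ) : MvPolynomial (Fin 3) ℚ)
        = C ((((m + 3) * ((m + 1).choose (2 * (k + 1)) * catalan (k + 1)) : ℕ)) : ℚ) := by
      rw [← map_add]
      congr 1
      push_cast at hc ⊢
      linarith [hc]
    linear_combination hc' * ((X 0 : MvPolynomial (Fin 3) ℚ) ^ (m + 2) * X 1 ^ (k + 2) * X 2 ^ (m - 2 * k - 1))
  · rw [Nat.choose_eq_zero_of_lt (show m < 2 * (k + 1) by omega)] at hc ⊢
    simp only [Nat.zero_mul, Nat.mul_zero, Nat.cast_zero, map_zero, zero_mul, zero_add, mul_zero] at hc ⊢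
    have hc' : (C (((4 * (m - 2 * k) * (m.choose (2 * k) * catalan k) : ℕ)) : ℚ) : MvPolynomial (Fin 3) ℚ)
        = C ((((m + 3) * ((m + 1).choose (2 * (k + 1)) * catalan (k + 1)) : ℕ)) : ℚ) := by
      congr 1
      push_cast at hc ⊢
      linarith [hc]
    linear_combination hc' * ((X 0 : MvPolynomial (Fin 3) ℚ) ^ (m + 2) * X 1 ^ (k + 2) * X 2 ^ (m - 2 * k - 1))
lemma DC (D : Derivation ℚ (MvPolynomial (Fin 3) ℚ) (MvPolynomial (Fin 3) ℚ))
    (a : ℚ) (p : MvPolynomial (Fin 3) ℚ) : D (C a * p) = C a * D p := by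
  rw [← smul_eq_C_mul, D.map_smul, smul_eq_C_mul]

lemma step (D : Derivation ℚ (MvPolynomial (Fin 3) ℚ) (MvPolynomial (Fin 3) ℚ))
    (ht : D (X 0) = (X 0) ^ 2 * X 2)
    (hu : D (X 1) = 2 * X 0 * X 1 * X 2)
    (hv : D (X 2) = 4 * X 0 * X 1)
    (m : ℕ) :
    D ((X 0) ^ (m + 1) * ∑ k ∈ range (m / 2 + 1), C (((m.choose (2 * k) * catalan k : ℕ)) : ℚ)
        * (X 1) ^ (k + 1) * (X 2) ^ (m - 2 * k))
    = C (((m + 3 : ℕ)) : ℚ) * ((X 0) ^ (m + 2) *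
        ∑ k ∈ range ((m + 1) / 2 + 1), C ((((m + 1).choose (2 * k) * catalan k : ℕ)) : ℚ)
          * (X 1) ^ (k + 1) * (X 2) ^ (m + 1 - 2 * k)) := by
  rw [Mext m (m + 2) (by omega), Mext (m + 1) (m + 2) (by omega)]
  rw [Derivation.leibniz, map_sum, Derivation.leibniz_pow, ht]
  have hterm : ∀ k ∈ range (m + 2),
      D (C (((m.choose (2 * k) * catalan k : ℕ)) : ℚ) * (X 1) ^ (k + 1) * (X 2) ^ (m - 2 * k))
      = C (((m.choose (2 * k) * catalan k : ℕ)) : ℚ) *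
          ((X 1) ^ (k + 1) * (C (((m - 2 * k : ℕ)) : ℚ) * ((X 2) ^ (m - 2 * k - 1) * (4 * X 0 * X 1)))
            + (X 2) ^ (m - 2 * k) * (C (((k + 1 : ℕ)) : ℚ) * ((X 1) ^ k * (2 * X 0 * X 1 * X 2)))) := by
    intro k _
    rw [mul_assoc, DC, Derivation.leibniz, Derivation.leibniz_pow, Derivation.leibniz_pow, hu, hv]
    simp only [smul_eq_mul, nsmul_eq_mul, Nat.add_sub_cancel, map_natCast]
  rw [Finset.sum_congr rfl hterm]
  simp only [smul_eq_mul, nsmul_eq_mul, Nat.add_sub_cancel]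
  rw [Finset.mul_sum, Finset.sum_mul, ← Finset.sum_add_distrib]
  have collect : ∀ k ∈ range (m + 2),
      (X 0 : MvPolynomial (Fin 3) ℚ) ^ (m + 1) *
        (C (((m.choose (2 * k) * catalan k : ℕ)) : ℚ) *
          ((X 1) ^ (k + 1) * (C (((m - 2 * k : ℕ)) : ℚ) * ((X 2) ^ (m - 2 * k - 1) * (4 * X 0 * X 1)))
            + (X 2) ^ (m - 2 * k) * (C (((k + 1 : ℕ)) : ℚ) * ((X 1) ^ k * (2 * X 0 * X 1 * X 2)))))
      + C (((m.choose (2 * k) * catalan k : ℕ)) : ℚ) * (X 1) ^ (k + 1) * (X 2) ^ (m - 2 * k) *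
          (((m + 1 : ℕ) : MvPolynomial (Fin 3) ℚ) * ((X 0) ^ m * ((X 0) ^ 2 * X 2)))
      = (C ((((m + 2 * k + 3) * (m.choose (2 * k) * catalan k) : ℕ)) : ℚ) *
          (X 0) ^ (m + 2) * X 1 ^ (k + 1) * X 2 ^ (m - 2 * k + 1))
        + (C (((4 * (m - 2 * k) * (m.choose (2 * k) * catalan k) : ℕ)) : ℚ) *
          (X 0) ^ (m + 2) * X 1 ^ (k + 2) * X 2 ^ (m - 2 * k - 1)) := by
    intro k _
    simp only [Nat.cast_mul, Nat.cast_add, Nat.cast_ofNat, Nat.cast_one, map_mul, map_add,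
      map_ofNat, map_one, map_natCast]
    ring
  rw [Finset.sum_congr rfl collect, Finset.sum_add_distrib, sumId, Finset.mul_sum, Finset.mul_sum]
  apply Finset.sum_congr rfl
  intro k _
  simp only [Nat.cast_mul, Nat.cast_add, Nat.cast_ofNat, map_mul, map_add, map_ofNat, map_natCast]
  ring

/-- Let D be the derivation on ℚ[t,u,v] (t = X 0, u = X 1, v = X 2) with
D(t) = t²v, D(u) = 2tuv, D(v) = 4tu.  Then for n ≥ 1,
Dⁿ(v/2) = (n+1)! · tⁿ · M_{n-1}(u;v). -/
theorem grammar_motzkin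
    (D : Derivation ℚ (MvPolynomial (Fin 3) ℚ) (MvPolynomial (Fin 3) ℚ))
    (ht : D (MvPolynomial.X 0) = (MvPolynomial.X 0) ^ 2 * MvPolynomial.X 2)
    (hu : D (MvPolynomial.X 1) = 2 * MvPolynomial.X 0 * MvPolynomial.X 1 * MvPolynomial.X 2)
    (hv : D (MvPolynomial.X 2) = 4 * MvPolynomial.X 0 * MvPolynomial.X 1)
    (n : ℕ) (hn : 1 ≤ n) :
    (⇑D)^[n] (MvPolynomial.C (1/2 : ℚ) * MvPolynomial.X 2)
      = MvPolynomial.C ((Nat.factorial (n + 1) : ℕ) : ℚ) * (MvPolynomial.X 0) ^ n *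
          ∑ k ∈ Finset.range ((n - 1) / 2 + 1),
            MvPolynomial.C ((((n - 1).choose (2 * k) * catalan k : ℕ)) : ℚ)
              * (MvPolynomial.X 1) ^ (k + 1) * (MvPolynomial.X 2) ^ ((n - 1) - 2 * k) := by
  induction n, hn using Nat.le_induction with
  | base =>
    rw [Function.iterate_one, DC, hv]
    norm_num [Finset.sum_range_one, Nat.factorial]
    have h2 : (C (2:ℚ) : MvPolynomial (Fin 3) ℚ) = C (1/2 : ℚ) * C (4 : ℚ) := by
      rw [← map_mul]; norm_num
    have h4 : (4 : MvPolynomial (Fin 3) ℚ) = C (4 : ℚ) :=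
      (map_ofNat (C : ℚ →+* MvPolynomial (Fin 3) ℚ) 4).symm
    rw [h4]
    linear_combination (-(X 0 * X 1 : MvPolynomial (Fin 3) ℚ)) * h2
  | succ n hn ih =>
    rw [Function.iterate_succ_apply', ih]
    obtain ⟨m, rfl⟩ : ∃ m, n = m + 1 := ⟨n - 1, by omega⟩
    simp only [Nat.add_sub_cancel]
    rw [mul_assoc, DC, step D ht hu hv m, ← mul_assoc, ← map_mul]
    have hfac : ((m + 1 + 1 + 1).factorial : ℚ) = ((m + 1 + 1).factorial : ℚ) * ((m + 3 : ℕ) : ℚ) := by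
      rw [show m + 1 + 1 + 1 = m + 3 by omega,
          show (m + 3).factorial = (m + 3) * (m + 2).factorial from Nat.factorial_succ (m + 2)]
      push_cast
      ring
    rw [show ((m + 1 + 1 + 1).factorial : ℚ) = ((m + 1 + 1).factorial : ℚ) * ((m + 3 : ℕ) : ℚ) from hfac]
    rw [mul_assoc]
end

section
/- Let D be the derivation on the Laurent polynomial ring ℚ[a,b,c,d,t,t^{-1}] with D(a) = D(b) = 3t(ad+bc), D(c) = 2a, D(d) = 2b, D(t) = t^2(c+d). Then D(t^{-2}) = -2t^{-1}(c+d), D^2(t^{-2}) = -4t^{-1}(a+b) + 2(c+d)^2, D^3(t^{-2}) = 12(a-b)(c-d), D^4(t^{-2}) = 24(a-b)^2, and D^5(t^{-2}) = 0. -/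
/-! Leibniz applied to `t * ti = 1` gives `D ti = -ti ^ 2 * D t = -(c + d)`, after which each
iterate is a direct Leibniz computation. The only `t` that appears, in `D a` and `D b`, is cancelled
by the `ti` from the previous iterate, so from `D³` on everything is polynomial in `a, b, c, d`; and
since `D a = D b`, the factor `a - b` is a constant of `D`, which makes `D⁵` vanish. -/

namespace Derivation

section NarayanaGrammar

variable {R A : Type*} [CommRing R] [CommRing A] [Algebra R A] (D : Derivation R A A)
  {a b c d t ti : A}

theorem map_ofNat (n : ℕ) [n.AtLeastTwo] : D (ofNat(n) : A) = 0 :=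
  Nat.cast_ofNat (R := A) (n := n) ▸ D.map_natCast n

theorem map_eq_neg_of_mul_eq_one (hti : t * ti = 1) (ht : D t = t ^ 2 * (c + d)) :
    D ti = -(c + d) := by
  rw [D.leibniz_of_mul_eq_one (mul_comm t ti ▸ hti), ht, smul_eq_mul]
  linear_combination (-(c + d) * (t * ti + 1)) * hti

theorem map_sq_of_map_eq_neg (hti : D ti = -(c + d)) :
    D (ti ^ 2) = -2 * ti * (c + d) := by
  simp only [D.leibniz_pow, hti, nsmul_eq_mul, smul_eq_mul]
  push_cast
  ring

theorem narayana_map_two (hti : D ti = -(c + d)) (hc : D c = 2 * a) (hd : D d = 2 * b) :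
    D (-2 * ti * (c + d)) = -4 * ti * (a + b) + 2 * (c + d) ^ 2 := by
  simp only [D.leibniz, map_add, map_neg, smul_eq_mul, hti, hc, hd, D.map_ofNat]
  ring

theorem narayana_map_three (htti : t * ti = 1) (hti : D ti = -(c + d))
    (ha : D a = 3 * t * (a * d + b * c)) (hb : D b = 3 * t * (a * d + b * c))
    (hc : D c = 2 * a) (hd : D d = 2 * b) :
    D (-4 * ti * (a + b) + 2 * (c + d) ^ 2) = 12 * (a - b) * (c - d) := by
  simp only [D.leibniz, D.leibniz_pow, map_add, map_neg, smul_eq_mul, nsmul_eq_mul, hti, ha, hb,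
    hc, hd, D.map_ofNat]
  push_cast
  linear_combination (-24 * (a * d + b * c)) * htti

theorem narayana_map_four (hab : D a = D b) (hc : D c = 2 * a) (hd : D d = 2 * b) :
    D (12 * (a - b) * (c - d)) = 24 * (a - b) ^ 2 := by
  simp only [D.leibniz, map_sub, smul_eq_mul, hab, hc, hd, D.map_ofNat]
  ring

theorem narayana_map_five (hab : D a = D b) : D (24 * (a - b) ^ 2) = 0 := by
  simp only [D.leibniz, D.leibniz_pow, map_sub, smul_eq_mul, hab, sub_self, D.map_ofNat]
  simp

end NarayanaGrammar

end Derivation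

/-- Let D be the derivation on the Laurent polynomial ring ℚ[a,b,c,d,t,t⁻¹] with
D(a) = D(b) = 3t(ad+bc), D(c) = 2a, D(d) = 2b, D(t) = t²(c+d) (here ti = t⁻¹).  Then
D(t⁻²) = -2t⁻¹(c+d), D²(t⁻²) = -4t⁻¹(a+b) + 2(c+d)², D³(t⁻²) = 12(a-b)(c-d),
D⁴(t⁻²) = 24(a-b)², and D⁵(t⁻²) = 0. -/
theorem grammar_narayana_laurent {A : Type*} [CommRing A] [Algebra ℚ A]
    (D : Derivation ℚ A A) (a b c d t ti : A) (hti : t * ti = 1)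
    (ha : D a = 3 * t * (a * d + b * c)) (hb : D b = 3 * t * (a * d + b * c))
    (hc : D c = 2 * a) (hd : D d = 2 * b) (ht : D t = t ^ 2 * (c + d)) :
    D (ti ^ 2) = -2 * ti * (c + d) ∧
    (⇑D)^[2] (ti ^ 2) = -4 * ti * (a + b) + 2 * (c + d) ^ 2 ∧
    (⇑D)^[3] (ti ^ 2) = 12 * (a - b) * (c - d) ∧
    (⇑D)^[4] (ti ^ 2) = 24 * (a - b) ^ 2 ∧
    (⇑D)^[5] (ti ^ 2) = 0 := by
  have hDti := D.map_eq_neg_of_mul_eq_one hti ht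
  have hab : D a = D b := ha.trans hb.symm
  have e1 := D.map_sq_of_map_eq_neg hDti
  have e2 := D.narayana_map_two hDti hc hd
  have e3 := D.narayana_map_three hti hDti ha hb hc hd
  have e4 := D.narayana_map_four hab hc hd
  have e5 := D.narayana_map_five hab
  refine ⟨e1, ?_, ?_, ?_, ?_⟩ <;>
    simp only [Function.iterate_succ_apply', Function.iterate_zero_apply, e1, e2, e3, e4, e5]
end

section
/- For n ≥ 1, the Narayana polynomial N_n(x) = \sum_{k=1}^{n} (1/n) binom(n,k) binom(n,k-1) x^k has only non-positive real zeros. -/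
/-!
By the Leibniz rule, `R_n = D^n [x^(n+1) (x+1)^(n+1)]` satisfies
`(1 - z)^(n+2) R_n(z / (1 - z)) = (n+1)! N_{n+1}(z)` for `z ≠ 1`. The roots of
`x^(n+1) (x+1)^(n+1)` are `0` and `-1`, so by the Gauss–Lucas theorem every complex root of
`R_n` lies on the segment `[-1, 0]`. Hence a root `z` of `N_{n+1}` (necessarily `z ≠ 1`, as
`N_{n+1}(1) > 0`) has `z / (1 - z) ∈ [-1, 0]`, which forces `z` to be real and non-positive.
-/

open Polynomial Finset Nat

theorem rootSet_iterate_derivative_subset {P : ℂ[X]} {S : Set ℂ} (hS : Convex ℝ S)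
    (hP : P.rootSet ℂ ⊆ S) (k : ℕ) : (derivative^[k] P).rootSet ℂ ⊆ S := by
  induction k with
  | zero => exact hP
  | succ k ih =>
    rw [Function.iterate_succ_apply']
    rcases lt_or_ge 0 (derivative^[k] P).degree with hdeg | hdeg
    · exact (rootSet_derivative_subset_convexHull_rootSet hdeg).trans (convexHull_min ih hS)
    · rw [eq_C_of_degree_le_zero hdeg, derivative_C, rootSet_zero]
      exact Set.empty_subset S

theorem natDegree_iterate_derivative_eq {R : Type*} [Semiring R] [IsAddTorsionFree R]
    (p : R[X]) (k : ℕ) : (derivative^[k] p).natDegree = p.natDegree - k := by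
  induction k with
  | zero => rfl
  | succ k ih => rw [Function.iterate_succ_apply', natDegree_derivative, ih, Nat.sub_sub]

theorem choose_mul_descFactorial_mul_descFactorial {n k : ℕ} (hk : k ≤ n) :
    n.choose k * (n + 1).descFactorial (n - k) * (n + 1).descFactorial k =
      n ! * (n + 1).choose k * (n + 1).choose (k + 1) := by
  rw [descFactorial_eq_factorial_mul_choose, descFactorial_eq_factorial_mul_choose,
    choose_symm_of_eq_add (show n + 1 = n - k + (k + 1) by omega),
    ← choose_mul_factorial_mul_factorial hk]
  ring

theorem rootSet_X_pow_mul_X_add_one_pow_subset (n : ℕ) :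
    (X ^ n * (X + 1) ^ n : ℂ[X]).rootSet ℂ ⊆ segment ℝ (-1) 0 := by
  intro w hw
  have hw : w ^ n * (w + 1) ^ n = 0 := by simpa using (mem_rootSet.mp hw).2
  rcases mul_eq_zero.mp hw with hw0 | hw1
  · exact eq_zero_of_pow_eq_zero hw0 ▸ right_mem_segment ℝ _ _
  · exact eq_neg_of_add_eq_zero_left (eq_zero_of_pow_eq_zero hw1) ▸ left_mem_segment ℝ _ _

/-- Up to an affine change of variable, Rodrigues' formula identifies this polynomial with
`(1 - x^2) P_n^(1,1)(x)`, a Jacobi polynomial. -/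
noncomputable def narayanaRodrigues (R : Type*) [CommRing R] (n : ℕ) : R[X] :=
  derivative^[n] (X ^ (n + 1) * (X + 1) ^ (n + 1))

theorem narayanaRodrigues_eq_sum (R : Type*) [CommRing R] (n : ℕ) :
    narayanaRodrigues R n =
      ∑ k ∈ range (n + 1), ((n ! * (n + 1).choose k * (n + 1).choose (k + 1) : ℕ) : R[X]) *
        (X ^ (k + 1) * (X + 1) ^ (n + 1 - k)) := by
  rw [narayanaRodrigues, iterate_derivative_mul]
  refine sum_congr rfl fun k hk => ?_
  have hk : k ≤ n := Nat.lt_succ_iff.mp (mem_range.mp hk)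
  rw [iterate_derivative_X_pow_eq_natCast_mul, ← C_1, iterate_derivative_X_add_pow, C_1,
    show n + 1 - (n - k) = k + 1 by omega, ← choose_mul_descFactorial_mul_descFactorial hk]
  simp only [nsmul_eq_mul, Nat.cast_mul]
  ring

theorem narayanaRodrigues_ne_zero (K : Type*) [Field K] [CharZero K] (n : ℕ) :
    narayanaRodrigues K n ≠ 0 := by
  have hdeg : (X ^ (n + 1) * (X + 1) ^ (n + 1) : K[X]).natDegree = 2 * n + 2 := by
    rw [← C_1, natDegree_mul (pow_ne_zero _ X_ne_zero) (pow_ne_zero _ (X_add_C_ne_zero 1)),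
      natDegree_X_pow, natDegree_pow, natDegree_X_add_C]
    ring
  refine ne_zero_of_natDegree_gt (n := 0) ?_
  rw [narayanaRodrigues, natDegree_iterate_derivative_eq, hdeg]
  omega

theorem rootSet_narayanaRodrigues_subset (n : ℕ) :
    (narayanaRodrigues ℂ n).rootSet ℂ ⊆ segment ℝ (-1) 0 :=
  rootSet_iterate_derivative_subset (convex_segment _ _)
    (rootSet_X_pow_mul_X_add_one_pow_subset _) n

theorem one_sub_pow_mul_eval_narayanaRodrigues {K : Type*} [Field K] (n : ℕ) {z : K}
    (hz : z ≠ 1) :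
    (1 - z) ^ (n + 2) * (narayanaRodrigues K n).eval (z / (1 - z)) =
      ∑ k ∈ range (n + 1), ((n ! * (n + 1).choose k * (n + 1).choose (k + 1) : ℕ) : K) *
        z ^ (k + 1) := by
  have h1z : 1 - z ≠ 0 := sub_ne_zero.mpr hz.symm
  have hw : z / (1 - z) + 1 = (1 - z)⁻¹ := by field_simp; ring
  rw [narayanaRodrigues_eq_sum, eval_finsetSum, mul_sum]
  refine sum_congr rfl fun k hk => ?_
  have hk : k ≤ n := Nat.lt_succ_iff.mp (mem_range.mp hk)
  simp only [eval_mul, eval_natCast, eval_pow, eval_add, eval_X, eval_one, hw]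
  rw [show n + 2 = (k + 1) + (n + 1 - k) by omega, pow_add, div_pow, inv_pow]
  field_simp

theorem factorial_mul_sum_narayana_eq {K : Type*} [Field K] [CharZero K] (n : ℕ) (z : K) :
    ((n + 1)! : K) * ∑ k ∈ Icc 1 (n + 1),
        (((n + 1).choose k * (n + 1).choose (k - 1) : K) / ↑(n + 1)) * z ^ k =
      ∑ k ∈ range (n + 1), ((n ! * (n + 1).choose k * (n + 1).choose (k + 1) : ℕ) : K) *
        z ^ (k + 1) := by
  rw [← Ico_add_one_right_eq_Icc, sum_Ico_eq_sum_range, mul_sum]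
  refine sum_congr (by simp) fun k _ => ?_
  rw [Nat.add_sub_cancel_left, factorial_succ, add_comm 1 k]
  push_cast
  field_simp

theorem sum_narayana_one_ne_zero {K : Type*} [Field K] [CharZero K] (n : ℕ) :
    (∑ k ∈ Icc 1 (n + 1),
      (((n + 1).choose k * (n + 1).choose (k - 1) : K) / ↑(n + 1)) * 1 ^ k) ≠ 0 := by
  refine right_ne_zero_of_mul (a := ((n + 1)! : K)) ?_
  rw [factorial_mul_sum_narayana_eq]
  simp only [one_pow, mul_one]
  have hpos : 0 < ∑ k ∈ range (n + 1), n ! * (n + 1).choose k * (n + 1).choose (k + 1) := by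
    refine sum_pos (fun k hk => ?_) nonempty_range_add_one
    have hk : k ≤ n := Nat.lt_succ_iff.mp (mem_range.mp hk)
    exact Nat.mul_pos (Nat.mul_pos (factorial_pos n) (choose_pos (by omega)))
      (choose_pos (by omega))
  exact_mod_cast hpos.ne'

theorem exists_nonpos_eq_of_div_one_sub_mem_segment {z : ℂ} (hz : z ≠ 1)
    (h : z / (1 - z) ∈ segment ℝ (-1) 0) : ∃ r : ℝ, r ≤ 0 ∧ z = r := by
  obtain ⟨θ, ⟨hθ0, hθ1⟩, hθ⟩ := segment_eq_image ℝ (-1 : ℂ) 0 ▸ h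
  have hθz : (θ : ℂ) * z = θ - 1 := by
    rw [eq_div_iff (sub_ne_zero.mpr hz.symm)] at hθ
    simp only [smul_neg, Complex.real_smul, Complex.ofReal_sub, Complex.ofReal_one, mul_one,
      neg_sub, smul_zero, add_zero] at hθ
    linear_combination -hθ
  have hθ_ne : θ ≠ 0 := by
    rintro rfl
    norm_num at hθz
  refine ⟨(θ - 1) / θ, div_nonpos_of_nonpos_of_nonneg (by linarith) hθ0, ?_⟩
  push_cast
  rw [eq_div_iff (by exact_mod_cast hθ_ne), mul_comm, hθz]

/-- For n ≥ 1, the Narayana polynomial N_n has only non-positive real zeros: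
every complex zero is a non-positive real number. -/
theorem narayanaPoly_nonpos_real_roots (n : ℕ) (hn : 1 ≤ n) (z : ℂ)
    (hz : ∑ k ∈ Finset.Icc 1 n, ((n.choose k * n.choose (k - 1) : ℂ) / n) * z ^ k = 0) :
    ∃ r : ℝ, r ≤ 0 ∧ z = (r : ℂ) := by
  obtain ⟨n, rfl⟩ : ∃ m, n = m + 1 := ⟨n - 1, by omega⟩
  have hz1 : z ≠ 1 := by
    rintro rfl
    exact sum_narayana_one_ne_zero n hz
  have hroot : z / (1 - z) ∈ (narayanaRodrigues ℂ n).rootSet ℂ := by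
    refine mem_rootSet.mpr ⟨narayanaRodrigues_ne_zero ℂ n, ?_⟩
    have h := one_sub_pow_mul_eval_narayanaRodrigues n hz1
    rw [← factorial_mul_sum_narayana_eq, hz, mul_zero] at h
    simpa [sub_ne_zero.mpr hz1.symm] using h
  exact exists_nonpos_eq_of_div_one_sub_mem_segment hz1 (rootSet_narayanaRodrigues_subset n hroot)
end

section
/- If a polynomial f(x) of degree n with real coefficients is written as f(x) = \sum_{k=0}^{\lfloor n/2 \rfloor} γ_k x^k (1+x)^{n-2k}, then f has only non-positive real zeros if and only if the polynomial γ(x) = \sum_{k=0}^{\lfloor n/2 \rfloor} γ_k x^k has only non-positive real zeros. -/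
/-!
The substitution `w = z / (1 + z) ^ 2` turns the gamma-expansion into
`f(z) = (1 + z) ^ n * γ(z / (1 + z) ^ 2)` away from `z = -1`. Every complex `w` is of this form,
and `z` is a non-positive real exactly when `w` is: for `w = r < 0` the equation
`r (1 + z) ^ 2 = z` is a real quadratic with discriminant `1 - 4 r > 0`, and both of its roots
`(1 - 2 r ± √(1 - 4 r)) / (2 r)` are negative. Hence the zeros of `f` and of `γ` correspond.
-/

open Polynomial

lemma aeval_gammaExpansion {R K : Type*} [CommRing R] [Field K] [Algebra R K]
    (n : ℕ) (γ : ℕ → R) {z : K} (hz : 1 + z ≠ 0) :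
    aeval z (∑ k ∈ Finset.range (n / 2 + 1), C (γ k) * X ^ k * (1 + X) ^ (n - 2 * k))
      = (1 + z) ^ n * aeval (z / (1 + z) ^ 2) (∑ k ∈ Finset.range (n / 2 + 1), C (γ k) * X ^ k) := by
  simp only [map_sum, map_mul, map_pow, map_add, map_one, aeval_X, aeval_C, Finset.mul_sum]
  refine Finset.sum_congr rfl fun k hk ↦ ?_
  have hpow : (1 + z) ^ n = (1 + z) ^ (n - 2 * k) * ((1 + z) ^ 2) ^ k := by
    rw [← pow_mul, ← pow_add]
    congr 1
    have := Finset.mem_range.mp hk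
    omega
  rw [div_pow, hpow]
  field_simp

lemma exists_div_one_add_sq_eq {K : Type*} [Field K] [IsAlgClosed K] [NeZero (2 : K)] (w : K) :
    ∃ z : K, 1 + z ≠ 0 ∧ z / (1 + z) ^ 2 = w := by
  rcases eq_or_ne w 0 with rfl | hw
  · exact ⟨0, by simp, by simp⟩
  obtain ⟨z, hz⟩ := exists_quadratic_eq_zero (b := 2 * w - 1) (c := w) hw
    (IsAlgClosed.exists_eq_mul_self _)
  have hquad : w * (1 + z) ^ 2 = z := by linear_combination hz
  have hz1 : 1 + z ≠ 0 := by
    intro h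
    have hz0 : z = 0 := by rw [← hquad, h]; ring
    simp [hz0] at h
  exact ⟨z, hz1, by rw [div_eq_iff (pow_ne_zero 2 hz1), hquad]⟩

lemma exists_nonpos_of_mul_one_add_sq_eq {r : ℝ} (hr : r ≤ 0) {z : ℂ}
    (hz : (r : ℂ) * (1 + z) ^ 2 = z) : ∃ t : ℝ, t ≤ 0 ∧ z = t := by
  rcases hr.eq_or_lt with rfl | hr
  · exact ⟨0, le_rfl, by simpa using hz.symm⟩
  set s := √(1 - 4 * r)
  have hs0 : 0 ≤ s := Real.sqrt_nonneg _
  have hs : s * s = 1 - 4 * r := Real.mul_self_sqrt (by linarith)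
  have hs_le : s ≤ 1 - 2 * r := by nlinarith
  have hdiscrim : discrim (r : ℂ) (2 * r - 1) r = s * s := by
    rw [discrim]
    exact_mod_cast (by rw [hs]; ring : (2 * r - 1) ^ 2 - 4 * r * r = s * s)
  have hroots := (quadratic_eq_zero_iff (by exact_mod_cast hr.ne) hdiscrim z).mp
    (by linear_combination hz)
  have hneg (t : ℝ) (ht : 0 ≤ t) : t / (2 * r) ≤ 0 := div_nonpos_of_nonneg_of_nonpos ht (by linarith)
  rcases hroots with rfl | rfl
  · exact ⟨(1 - 2 * r + s) / (2 * r), hneg _ (by linarith), by push_cast; ring⟩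
  · exact ⟨(1 - 2 * r - s) / (2 * r), hneg _ (by linarith), by push_cast; ring⟩

theorem gamma_expansion_nonpos_roots_general (n : ℕ) (f : Polynomial ℝ) (γ : ℕ → ℝ)
    (hf : f = ∑ k ∈ Finset.range (n / 2 + 1),
        Polynomial.C (γ k) * Polynomial.X ^ k * (1 + Polynomial.X) ^ (n - 2 * k)) :
    ((∀ z : ℂ, Polynomial.aeval z f = 0 → ∃ r : ℝ, r ≤ 0 ∧ z = (r : ℂ)) ↔
      (∀ z : ℂ,
        Polynomial.aeval z (∑ k ∈ Finset.range (n / 2 + 1), Polynomial.C (γ k) * Polynomial.X ^ k)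
          = 0 → ∃ r : ℝ, r ≤ 0 ∧ z = (r : ℂ))) := by
  subst hf
  constructor
  · intro hf w hw
    obtain ⟨z, hz1, rfl⟩ := exists_div_one_add_sq_eq w
    obtain ⟨r, hr, rfl⟩ := hf z (by rw [aeval_gammaExpansion n γ hz1, hw, mul_zero])
    exact ⟨r / (1 + r) ^ 2, div_nonpos_of_nonpos_of_nonneg hr (sq_nonneg _), by push_cast; rfl⟩
  · intro hγ z hz
    by_cases hz1 : 1 + z = 0
    · exact ⟨-1, by norm_num, by push_cast; linear_combination hz1⟩
    rw [aeval_gammaExpansion n γ hz1] at hz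
    obtain ⟨r, hr, hw⟩ := hγ _ ((mul_eq_zero.mp hz).resolve_left (pow_ne_zero n hz1))
    exact exists_nonpos_of_mul_one_add_sq_eq hr (by rw [← hw]; field_simp)

/-- If a real polynomial f of degree n has the gamma-expansion
f = ∑_{k=0}^{⌊n/2⌋} γ_k x^k (1+x)^{n-2k}, then f has only non-positive real zeros
(all complex zeros are real and ≤ 0) iff γ(x) = ∑_k γ_k x^k has only non-positive real zeros. -/
theorem gamma_expansion_nonpos_roots (n : ℕ) (f : Polynomial ℝ) (γ : ℕ → ℝ)
    (hdeg : f.natDegree = n)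
    (hf : f = ∑ k ∈ Finset.range (n / 2 + 1),
        Polynomial.C (γ k) * Polynomial.X ^ k * (1 + Polynomial.X) ^ (n - 2 * k)) :
    ((∀ z : ℂ, Polynomial.aeval z f = 0 → ∃ r : ℝ, r ≤ 0 ∧ z = (r : ℂ)) ↔
      (∀ z : ℂ,
        Polynomial.aeval z (∑ k ∈ Finset.range (n / 2 + 1), Polynomial.C (γ k) * Polynomial.X ^ k)
          = 0 → ∃ r : ℝ, r ≤ 0 ∧ z = (r : ℂ))) :=
  gamma_expansion_nonpos_roots_general n f γ hf
end
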